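/- arXiv:1707.00282 — 14 statements merged into one kernel-verified Lean document; each statement's English description precedes it below -/
import Mathlib

section
/- T = 0 if and only if T ∘ T = 0. -/
open scoped InnerProductSpace

section OddSkewAdjoint

variable {H : Type*} [NormedAddCommGroup H] [InnerProductSpace ℂ H] {T : H →ₗ[ℂ] H}

theorem inner_apply_self_eq (hT : ∀ u v : H, ⟪T u, v⟫_ℂ = ⟪u, (-Complex.I) • T v⟫_ℂ) (v : H) :
    ⟪T v, T v⟫_ℂ = -Complex.I * ⟪v, T (T v)⟫_ℂ := by
  rw [hT, inner_smul_right]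

theorem apply_eq_zero_of_apply_apply_eq_zero
    (hT : ∀ u v : H, ⟪T u, v⟫_ℂ = ⟪u, (-Complex.I) • T v⟫_ℂ) {v : H} (hv : T (T v) = 0) :
    T v = 0 :=
  inner_self_eq_zero.mp <| by rw [inner_apply_self_eq hT, hv, inner_zero_right, mul_zero]

end OddSkewAdjoint

/-- Let `H` be a complex inner product space (inner product
conjugate-linear in the first variable) and `T : H → H` a `ℂ`-linear map satisfying
`⟪T u, v⟫ = ⟪u, (−i)·T v⟫` for all `u, v`.  Then `T = 0` if and only if `T ∘ T = 0`. -/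
theorem eq_zero_iff_comp_self_eq_zero
    {H : Type*} [NormedAddCommGroup H] [InnerProductSpace ℂ H]
    (T : H →ₗ[ℂ] H)
    (hT : ∀ u v : H, ⟪T u, v⟫_ℂ = ⟪u, (-Complex.I) • T v⟫_ℂ) :
    T = 0 ↔ T ∘ₗ T = 0 := by
  refine ⟨fun h => by rw [h, LinearMap.zero_comp], fun h => ?_⟩
  ext v
  exact apply_eq_zero_of_apply_apply_eq_zero hT (LinearMap.congr_fun h v)
end

section
/- For T ∈ End(k), the bilinear form κ_T satisfies the 2-cocycle identity κ(T[x,y], z) = κ(T x, [y,z]) − κ(T y, [x,z]) for all x, y, z ∈ k if and only if T is a derivation of k. -/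
/-! By invariance and skew-symmetry, the right-hand side of the cocycle identity is
`κ (⁅T x, y⁆ + ⁅x, T y⁆) z`, and nondegeneracy turns equality of the functionals
`κ a` and `κ b` into `a = b`. -/

section InvariantForm

variable {R L M : Type*} [CommRing R] [LieRing L] [LieAlgebra R L] [AddCommGroup M] [Module R M]
  (κ : L →ₗ[R] L →ₗ[R] M)

theorem apply_lie_add_lie_eq_sub (hκinv : ∀ x y z : L, κ ⁅x, y⁆ z = κ x ⁅y, z⁆) (T : L → L)
    (x y z : L) : κ (⁅T x, y⁆ + ⁅x, T y⁆) z = κ (T x) ⁅y, z⁆ - κ (T y) ⁅x, z⁆ := by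
  rw [← lie_skew x (T y), map_add, map_neg, LinearMap.add_apply, LinearMap.neg_apply,
    hκinv, hκinv, sub_eq_add_neg]

theorem forall_apply_eq_iff_eq (hκnd : ∀ x : L, (∀ y : L, κ x y = 0) → x = 0) {a b : L} :
    (∀ z, κ a z = κ b z) ↔ a = b := by
  refine ⟨fun h ↦ sub_eq_zero.mp (hκnd _ fun z ↦ ?_), fun h _ ↦ h ▸ rfl⟩
  rw [map_sub, LinearMap.sub_apply, h z, sub_self]

end InvariantForm

theorem kappaT_cocycle_iff_derivation_general
    {𝔽 : Type*} [Field 𝔽]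
    {k : Type*} [LieRing k] [LieAlgebra 𝔽 k]
    (κ : k →ₗ[𝔽] k →ₗ[𝔽] 𝔽)
    (hκinv : ∀ x y z : k, κ ⁅x, y⁆ z = κ x ⁅y, z⁆)
    (hκnd : ∀ x : k, (∀ y : k, κ x y = 0) → x = 0)
    (T : k →ₗ[𝔽] k) :
    (∀ x y z : k, κ (T ⁅x, y⁆) z = κ (T x) ⁅y, z⁆ - κ (T y) ⁅x, z⁆) ↔
      (∀ x y : k, T ⁅x, y⁆ = ⁅T x, y⁆ + ⁅x, T y⁆) := by
  simp only [← apply_lie_add_lie_eq_sub κ hκinv, forall_apply_eq_iff_eq κ hκnd]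

/-- Let `k` be a Lie algebra over a field `𝔽` of characteristic zero and
`κ` a nondegenerate invariant symmetric bilinear form on `k`.  For `T ∈ End(k)`, the
bilinear form `κ_T(x,y) = κ(T x, y)` satisfies the 2-cocycle identity
`κ(T[x,y], z) = κ(T x, [y,z]) − κ(T y, [x,z])` for all `x, y, z` if and only if `T` is a
derivation of `k`. -/
theorem kappaT_cocycle_iff_derivation
    {𝔽 : Type*} [Field 𝔽] [CharZero 𝔽]
    {k : Type*} [LieRing k] [LieAlgebra 𝔽 k]
    (κ : k →ₗ[𝔽] k →ₗ[𝔽] 𝔽)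
    (hκsymm : ∀ x y : k, κ x y = κ y x)
    (hκinv : ∀ x y z : k, κ ⁅x, y⁆ z = κ x ⁅y, z⁆)
    (hκnd : ∀ x : k, (∀ y : k, κ x y = 0) → x = 0)
    (T : k →ₗ[𝔽] k) :
    (∀ x y z : k, κ (T ⁅x, y⁆) z = κ (T x) ⁅y, z⁆ - κ (T y) ⁅x, z⁆) ↔
      (∀ x y : k, T ⁅x, y⁆ = ⁅T x, y⁆ + ⁅x, T y⁆) :=
  kappaT_cocycle_iff_derivation_general κ hκinv hκnd T
end

section
/- Assume k is finite-dimensional. Then the map T ↦ κ_T restricts to a linear bijection from der₋(k) onto the space Z²(k) of 𝔽-valued 2-cocycles of k. -/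
/-!
A 2-cochain `ω` of `k` is `κ(T·, ·)` for a unique endomorphism `T`, since `κ` identifies `k` with its
dual. By invariance of `κ`, the cocycle defect `ω ⁅x, y⁆ z - ω x ⁅y, z⁆ + ω y ⁅x, z⁆` of `κ_T` is
`κ (T ⁅x, y⁆ - ⁅T x, y⁆ - ⁅x, T y⁆) z`, so by nondegeneracy `κ_T` is a cocycle exactly when `T` is a
derivation; by symmetry of `κ`, `κ_T` is antisymmetric exactly when `T` is skew-adjoint.
So `der₋(k)` is the full preimage of `Z²(k)` under a bijection.
-/

section InvariantForm

variable {R L : Type*} [CommRing R] [LieRing L] [LieAlgebra R L] {κ : L →ₗ[R] L →ₗ[R] R}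

theorem apply_lie_eq_neg_apply_lie (hκ : ∀ x y z : L, κ ⁅x, y⁆ z = κ x ⁅y, z⁆) (a b c : L) :
    κ a ⁅b, c⁆ = -κ b ⁅a, c⁆ := by
  rw [← hκ, ← hκ, ← lie_skew b a, map_neg, LinearMap.neg_apply, neg_neg]

theorem apply_derivation_defect (hκ : ∀ x y z : L, κ ⁅x, y⁆ z = κ x ⁅y, z⁆)
    (T : L →ₗ[R] L) (x y z : L) :
    κ (T ⁅x, y⁆ - ⁅T x, y⁆ - ⁅x, T y⁆) z =
      (κ ∘ₗ T) ⁅x, y⁆ z - ((κ ∘ₗ T) x ⁅y, z⁆ - (κ ∘ₗ T) y ⁅x, z⁆) := by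
  simp only [map_sub, LinearMap.sub_apply, LinearMap.comp_apply, hκ,
    apply_lie_eq_neg_apply_lie hκ x (T y)]
  ring

theorem comp_cocycle_iff_derivation (hκ : ∀ x y z : L, κ ⁅x, y⁆ z = κ x ⁅y, z⁆)
    (hnd : κ.SeparatingLeft) (T : L →ₗ[R] L) :
    (∀ x y z : L, (κ ∘ₗ T) ⁅x, y⁆ z = (κ ∘ₗ T) x ⁅y, z⁆ - (κ ∘ₗ T) y ⁅x, z⁆) ↔
      ∀ x y : L, T ⁅x, y⁆ = ⁅T x, y⁆ + ⁅x, T y⁆ := by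
  simp only [← sub_eq_zero (b := (κ ∘ₗ T) _ _ - _), ← apply_derivation_defect hκ,
    ← sub_eq_zero (b := ⁅T _, _⁆ + _), ← sub_sub]
  exact ⟨fun h x y => hnd _ (h x y), fun h x y => by simp [h x y]⟩

end InvariantForm

theorem comp_antisymm_iff_skewAdjoint {R M : Type*} [CommRing R] [AddCommGroup M] [Module R M]
    {κ : M →ₗ[R] M →ₗ[R] R} (hκ : ∀ x y : M, κ x y = κ y x) (T : M →ₗ[R] M) :
    (∀ x y : M, (κ ∘ₗ T) x y = -(κ ∘ₗ T) y x) ↔ ∀ x y : M, κ (T x) y = -κ x (T y) := by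
  simp only [LinearMap.comp_apply, hκ (T _)]

theorem bijective_comp_of_separatingLeft {K V W : Type*} [Field K] [AddCommGroup V] [Module K V]
    [FiniteDimensional K V] [AddCommGroup W] [Module K W] {κ : V →ₗ[K] V →ₗ[K] K}
    (hκ : κ.SeparatingLeft) : Function.Bijective (fun T : W →ₗ[K] V => κ ∘ₗ T) := by
  have hinj : Function.Injective κ := LinearMap.ker_eq_bot.mp
    (LinearMap.separatingLeft_iff_ker_eq_bot.mp hκ)
  have hbij : Function.Bijective κ := ⟨hinj, (LinearMap.injective_iff_surjective_of_finrank_eq_finrank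
    (Subspace.dual_finrank_eq (K := K) (V := V)).symm).mp hinj⟩
  exact (LinearEquiv.congrRight (LinearEquiv.ofBijective κ hbij)).bijective

theorem kappaT_bijOn_derNeg_Z2_general
    {𝔽 : Type*} [Field 𝔽]
    {k : Type*} [LieRing k] [LieAlgebra 𝔽 k] [FiniteDimensional 𝔽 k]
    (κ : k →ₗ[𝔽] k →ₗ[𝔽] 𝔽)
    (hκsymm : ∀ x y : k, κ x y = κ y x)
    (hκinv : ∀ x y z : k, κ ⁅x, y⁆ z = κ x ⁅y, z⁆)
    (hκnd : ∀ x : k, (∀ y : k, κ x y = 0) → x = 0) :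
    Set.BijOn (fun T : k →ₗ[𝔽] k => κ ∘ₗ T)
      {D : k →ₗ[𝔽] k | (∀ x y : k, D ⁅x, y⁆ = ⁅D x, y⁆ + ⁅x, D y⁆) ∧
        (∀ x y : k, κ (D x) y = - κ x (D y))}
      {ω : k →ₗ[𝔽] k →ₗ[𝔽] 𝔽 | (∀ x y : k, ω x y = - ω y x) ∧
        (∀ x y z : k, ω ⁅x, y⁆ z = ω x ⁅y, z⁆ - ω y ⁅x, z⁆)} := by
  convert (bijective_comp_of_separatingLeft hκnd).bijOn_preimage using 1
  exact Set.ext fun T => (and_congr (comp_cocycle_iff_derivation hκinv hκnd T).symm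
    (comp_antisymm_iff_skewAdjoint hκsymm T).symm).trans and_comm

/-- Let `k` be a finite-dimensional Lie algebra over a field `𝔽` of
characteristic zero, with a nondegenerate invariant symmetric bilinear form `κ`.
Then the (linear) map `T ↦ κ_T = κ(T·, ·)` restricts to a bijection from
`der₋(k)` — the skew-adjoint derivations of `k` — onto the space `Z²(k)` of
`𝔽`-valued 2-cocycles of `k`. -/
theorem kappaT_bijOn_derNeg_Z2
    {𝔽 : Type*} [Field 𝔽] [CharZero 𝔽]
    {k : Type*} [LieRing k] [LieAlgebra 𝔽 k] [FiniteDimensional 𝔽 k]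
    (κ : k →ₗ[𝔽] k →ₗ[𝔽] 𝔽)
    (hκsymm : ∀ x y : k, κ x y = κ y x)
    (hκinv : ∀ x y z : k, κ ⁅x, y⁆ z = κ x ⁅y, z⁆)
    (hκnd : ∀ x : k, (∀ y : k, κ x y = 0) → x = 0) :
    Set.BijOn (fun T : k →ₗ[𝔽] k => κ ∘ₗ T)
      {D : k →ₗ[𝔽] k | (∀ x y : k, D ⁅x, y⁆ = ⁅D x, y⁆ + ⁅x, D y⁆) ∧
        (∀ x y : k, κ (D x) y = - κ x (D y))}
      {ω : k →ₗ[𝔽] k →ₗ[𝔽] 𝔽 | (∀ x y : k, ω x y = - ω y x) ∧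
        (∀ x y z : k, ω ⁅x, y⁆ z = ω x ⁅y, z⁆ - ω y ⁅x, z⁆)} :=
  kappaT_bijOn_derNeg_Z2_general κ hκsymm hκinv hκnd
end

section
/- Assume k is finite-dimensional. Then the map T ↦ κ_T restricts to a linear bijection from cent₊(k) onto the space of invariant symmetric bilinear forms on k. -/
/-!
Since `κ` is nondegenerate and `k` is finite-dimensional, `κ : k → k*` is a linear isomorphism,
so every bilinear form is `κ_T` for exactly one `T`. Symmetry of `κ_T` is κ-self-adjointness of
`T`, and, using the invariance of `κ`, invariance of `κ_T` reads
`κ(T[x,y], z) = κ([Tx, y], z)`, which by nondegeneracy is the centroid identity.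
-/

namespace LinearMap

theorem comp_symm_iff {R M : Type*} [CommSemiring R] [AddCommMonoid M] [Module R M]
    {κ : M →ₗ[R] M →ₗ[R] R} (hκ : ∀ x y, κ x y = κ y x) (S : M →ₗ[R] M) :
    (∀ x y, (κ ∘ₗ S) x y = (κ ∘ₗ S) y x) ↔ ∀ x y, κ (S x) y = κ x (S y) := by
  simp only [comp_apply]
  exact forall₂_congr fun x y => by rw [hκ x (S y)]

theorem comp_invariant_iff {R L : Type*} [CommSemiring R] [LieRing L] [Module R L]
    {κ : L →ₗ[R] L →ₗ[R] R} (hκ : ∀ x y z, κ ⁅x, y⁆ z = κ x ⁅y, z⁆)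
    (hκ_inj : Function.Injective κ) (S : L →ₗ[R] L) :
    (∀ x y z, (κ ∘ₗ S) ⁅x, y⁆ z = (κ ∘ₗ S) x ⁅y, z⁆) ↔
      ∀ x y, S ⁅x, y⁆ = ⁅S x, y⁆ := by
  simp only [comp_apply, ← hκ (S _)]
  constructor
  · exact fun h x y => hκ_inj (LinearMap.ext (h x y))
  · intro h x y z
    rw [h]

theorem exists_comp_eq_of_injective {K V : Type*} [Field K] [AddCommGroup V] [Module K V]
    [FiniteDimensional K V] {κ : V →ₗ[K] V →ₗ[K] K} (hκ_inj : Function.Injective κ)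
    (β : V →ₗ[K] V →ₗ[K] K) : ∃ T : V →ₗ[K] V, κ ∘ₗ T = β :=
  Module.projective_lifting_property κ β <|
    (injective_iff_surjective_of_finrank_eq_finrank Subspace.dual_finrank_eq.symm).1 hκ_inj

end LinearMap

theorem kappaT_bijOn_centPlus_invSym_general
    {𝔽 : Type*} [Field 𝔽]
    {k : Type*} [LieRing k] [LieAlgebra 𝔽 k] [FiniteDimensional 𝔽 k]
    (κ : k →ₗ[𝔽] k →ₗ[𝔽] 𝔽)
    (hκsymm : ∀ x y : k, κ x y = κ y x)
    (hκinv : ∀ x y z : k, κ ⁅x, y⁆ z = κ x ⁅y, z⁆)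
    (hκnd : ∀ x : k, (∀ y : k, κ x y = 0) → x = 0) :
    Set.BijOn (fun T : k →ₗ[𝔽] k => κ ∘ₗ T)
      {S : k →ₗ[𝔽] k | (∀ x y : k, S ⁅x, y⁆ = ⁅S x, y⁆) ∧
        (∀ x y : k, κ (S x) y = κ x (S y))}
      {β : k →ₗ[𝔽] k →ₗ[𝔽] 𝔽 | (∀ x y : k, β x y = β y x) ∧
        (∀ x y z : k, β ⁅x, y⁆ z = β x ⁅y, z⁆)} := by
  have hκ_inj : Function.Injective κ :=
    (injective_iff_map_eq_zero κ).2 fun x hx => hκnd x fun y => by simp [hx]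
  refine ⟨?mapsTo, fun S _ S' _ h => (LinearMap.cancel_left hκ_inj).1 h, ?surjOn⟩
  case mapsTo =>
    rintro S ⟨hS_cent, hS_symm⟩
    exact ⟨(LinearMap.comp_symm_iff hκsymm S).2 hS_symm,
      (LinearMap.comp_invariant_iff hκinv hκ_inj S).2 hS_cent⟩
  case surjOn =>
    rintro β ⟨hβ_symm, hβ_inv⟩
    obtain ⟨T, rfl⟩ := LinearMap.exists_comp_eq_of_injective hκ_inj β
    exact ⟨T, ⟨(LinearMap.comp_invariant_iff hκinv hκ_inj T).1 hβ_inv,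
      (LinearMap.comp_symm_iff hκsymm T).1 hβ_symm⟩, rfl⟩

/-- Let `k` be a finite-dimensional Lie algebra over a field `𝔽` of
characteristic zero, with a nondegenerate invariant symmetric bilinear form `κ`.
Then the (linear) map `T ↦ κ_T = κ(T·, ·)` restricts to a bijection from
`cent₊(k)` — the κ-symmetric elements of the centroid of `k` — onto the space of
invariant symmetric bilinear forms on `k`. -/
theorem kappaT_bijOn_centPlus_invSym
    {𝔽 : Type*} [Field 𝔽] [CharZero 𝔽]
    {k : Type*} [LieRing k] [LieAlgebra 𝔽 k] [FiniteDimensional 𝔽 k]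
    (κ : k →ₗ[𝔽] k →ₗ[𝔽] 𝔽)
    (hκsymm : ∀ x y : k, κ x y = κ y x)
    (hκinv : ∀ x y z : k, κ ⁅x, y⁆ z = κ x ⁅y, z⁆)
    (hκnd : ∀ x : k, (∀ y : k, κ x y = 0) → x = 0) :
    Set.BijOn (fun T : k →ₗ[𝔽] k => κ ∘ₗ T)
      {S : k →ₗ[𝔽] k | (∀ x y : k, S ⁅x, y⁆ = ⁅S x, y⁆) ∧
        (∀ x y : k, κ (S x) y = κ x (S y))}
      {β : k →ₗ[𝔽] k →ₗ[𝔽] 𝔽 | (∀ x y : k, β x y = β y x) ∧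
        (∀ x y z : k, β ⁅x, y⁆ z = β x ⁅y, z⁆)} :=
  kappaT_bijOn_centPlus_invSym_general κ hκsymm hκinv hκnd
end

section
/- Assume k is finite-dimensional, let M be an 𝔽-vector space, D ∈ der₋(k) and m ∈ M. Then ν_{D;m}(x,y) := κ(D x, y)·m is a 2-cocycle of k with values in M, and if m ≠ 0, then ν_{D;m} is a 2-coboundary if and only if D is an inner derivation. -/
/-! If `D = ad t` then invariance gives `κ (D x) y = κ t ⁅x, y⁆`, so `ν_{D;m}` is the coboundary of
`z ↦ κ t z • m`. Conversely, composing a primitive `ℓ` of `ν_{D;m}` with a functional sending `m`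
to `1` gives a scalar primitive `λ`; nondegeneracy in finite dimension writes `λ = κ t`, and then
`κ (D x) y = κ ⁅t, x⁆ y` for all `y` forces `D x = ⁅t, x⁆`. -/

section CommRing

variable {R L : Type*} [CommRing R] [LieRing L] [LieAlgebra R L]

theorem invariant_form_derivation_cocycle (κ : L →ₗ[R] L →ₗ[R] R)
    (hκinv : ∀ x y z : L, κ ⁅x, y⁆ z = κ x ⁅y, z⁆)
    (D : L →ₗ[R] L) (hDder : ∀ x y : L, D ⁅x, y⁆ = ⁅D x, y⁆ + ⁅x, D y⁆) (x y z : L) :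
    κ (D ⁅x, y⁆) z = κ (D x) ⁅y, z⁆ - κ (D y) ⁅x, z⁆ := by
  have hswap : κ ⁅x, D y⁆ z = -κ (D y) ⁅x, z⁆ := by
    rw [← lie_skew x (D y), map_neg, LinearMap.neg_apply, hκinv]
  rw [hDder, map_add, LinearMap.add_apply, hκinv, hswap, sub_eq_add_neg]

end CommRing

section Field

variable {K L : Type*} [Field K] [LieRing L] [LieAlgebra K L] [FiniteDimensional K L]

theorem LinearMap.SeparatingLeft.exists_eq {κ : L →ₗ[K] L →ₗ[K] K} (hκ : κ.SeparatingLeft)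
    (f : Module.Dual K L) : ∃ t : L, κ t = f :=
  (κ.linearEquivOfInjective (LinearMap.ker_eq_bot.mp (separatingLeft_iff_ker_eq_bot.mp hκ))
    Subspace.dual_finrank_eq.symm).surjective f

theorem exists_eq_lie_of_form_eq_comp_lie {κ : L →ₗ[K] L →ₗ[K] K}
    (hκinv : ∀ x y z : L, κ ⁅x, y⁆ z = κ x ⁅y, z⁆) (hκnd : κ.SeparatingLeft)
    {D : L →ₗ[K] L} {ℓ : Module.Dual K L} (hℓ : ∀ x y : L, κ (D x) y = ℓ ⁅x, y⁆) :
    ∃ t : L, ∀ x : L, D x = ⁅t, x⁆ := by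
  obtain ⟨t, rfl⟩ := hκnd.exists_eq ℓ
  refine ⟨t, fun x => sub_eq_zero.mp (hκnd _ fun y => ?_)⟩
  rw [map_sub, LinearMap.sub_apply, hℓ, hκinv, sub_self]

end Field

theorem nu_D_m_cocycle_and_coboundary_iff_inner_general
    {𝔽 : Type*} [Field 𝔽]
    {k : Type*} [LieRing k] [LieAlgebra 𝔽 k] [FiniteDimensional 𝔽 k]
    {M : Type*} [AddCommGroup M] [Module 𝔽 M]
    (κ : k →ₗ[𝔽] k →ₗ[𝔽] 𝔽)
    (hκsymm : ∀ x y : k, κ x y = κ y x)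
    (hκinv : ∀ x y z : k, κ ⁅x, y⁆ z = κ x ⁅y, z⁆)
    (hκnd : ∀ x : k, (∀ y : k, κ x y = 0) → x = 0)
    (D : k →ₗ[𝔽] k)
    (hDder : ∀ x y : k, D ⁅x, y⁆ = ⁅D x, y⁆ + ⁅x, D y⁆)
    (hDskew : ∀ x y : k, κ (D x) y = - κ x (D y))
    (m : M) :
    (∀ x y : k, κ (D x) y • m = -(κ (D y) x • m)) ∧
    (∀ x y z : k, κ (D ⁅x, y⁆) z • m = κ (D x) ⁅y, z⁆ • m - κ (D y) ⁅x, z⁆ • m) ∧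
    (m ≠ 0 →
      ((∃ ℓ : k →ₗ[𝔽] M, ∀ x y : k, κ (D x) y • m = ℓ ⁅x, y⁆) ↔
        (∃ t : k, ∀ x : k, D x = ⁅t, x⁆))) := by
  refine ⟨fun x y => ?_, fun x y z => ?_, fun hm => ⟨?_, ?_⟩⟩
  · rw [hDskew, hκsymm x, neg_smul]
  · rw [invariant_form_derivation_cocycle κ hκinv D hDder, sub_smul]
  · rintro ⟨ℓ, hℓ⟩
    obtain ⟨f, hfm⟩ := Module.Projective.exists_dual_eq_one 𝔽 hm
    refine exists_eq_lie_of_form_eq_comp_lie hκinv hκnd (ℓ := f ∘ₗ ℓ) fun x y => ?_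
    rw [LinearMap.comp_apply, ← hℓ, map_smul, hfm, smul_eq_mul, mul_one]
  · rintro ⟨t, ht⟩
    refine ⟨LinearMap.toSpanSingleton 𝔽 M m ∘ₗ κ t, fun x y => ?_⟩
    rw [LinearMap.comp_apply, LinearMap.toSpanSingleton_apply, ht, hκinv]

/-- Let `k` be a finite-dimensional Lie algebra over a field `𝔽` of
characteristic zero with a nondegenerate invariant symmetric bilinear form `κ`,
`M` an `𝔽`-vector space, `D ∈ der₋(k)` (a κ-skew derivation) and `m ∈ M`.  Then
`ν_{D;m}(x,y) := κ(D x, y)·m` is a 2-cocycle of `k` with values in `M`, and if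
`m ≠ 0`, then `ν_{D;m}` is a 2-coboundary if and only if `D` is an inner derivation. -/
theorem nu_D_m_cocycle_and_coboundary_iff_inner
    {𝔽 : Type*} [Field 𝔽] [CharZero 𝔽]
    {k : Type*} [LieRing k] [LieAlgebra 𝔽 k] [FiniteDimensional 𝔽 k]
    {M : Type*} [AddCommGroup M] [Module 𝔽 M]
    (κ : k →ₗ[𝔽] k →ₗ[𝔽] 𝔽)
    (hκsymm : ∀ x y : k, κ x y = κ y x)
    (hκinv : ∀ x y z : k, κ ⁅x, y⁆ z = κ x ⁅y, z⁆)
    (hκnd : ∀ x : k, (∀ y : k, κ x y = 0) → x = 0)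
    (D : k →ₗ[𝔽] k)
    (hDder : ∀ x y : k, D ⁅x, y⁆ = ⁅D x, y⁆ + ⁅x, D y⁆)
    (hDskew : ∀ x y : k, κ (D x) y = - κ x (D y))
    (m : M) :
    (∀ x y : k, κ (D x) y • m = -(κ (D y) x • m)) ∧
    (∀ x y z : k, κ (D ⁅x, y⁆) z • m = κ (D x) ⁅y, z⁆ • m - κ (D y) ⁅x, z⁆ • m) ∧
    (m ≠ 0 →
      ((∃ ℓ : k →ₗ[𝔽] M, ∀ x y : k, κ (D x) y • m = ℓ ⁅x, y⁆) ↔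
        (∃ t : k, ∀ x : k, D x = ⁅t, x⁆))) :=
  nu_D_m_cocycle_and_coboundary_iff_inner_general κ hκsymm hκinv hκnd D hDder hDskew m
end

section
/- Assume k is finite-dimensional and let S₁,…,S_m ∈ cent₊(k) be such that κ_{S₁},…,κ_{S_m} form a basis of the space of invariant symmetric bilinear forms on k. Then for every bilinear map α : k × k → M with values in an 𝔽-vector space M that is symmetric (α(x,y) = α(y,x)) and invariant (α([x,y],z) = α(x,[y,z])), there exist m₁,…,m_m ∈ M such that α(x,y) = Σⱼ κ(Sⱼ x, y)·mⱼ for all x, y ∈ k. -/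
/-!
Composing `α` with any linear functional on `M` gives an invariant symmetric scalar form, hence a
combination of the `κ_{Sⱼ}`. Since `k` is finite-dimensional, `α` takes values in a
finite-dimensional subspace; expanding `α` in a basis of it and each coordinate form in the
`κ_{Sⱼ}` produces the vectors `mⱼ`.
-/

open Submodule

namespace LinearMap

variable {R N P M ι : Type*} [CommRing R] [AddCommGroup N] [Module R N] [AddCommGroup P]
  [Module R P] [AddCommGroup M] [Module R M] [Fintype ι]

theorem exists_eq_sum_smul_of_forall_compr₂_mem_span [Module.Free R M] [Module.Finite R M]
    (B : ι → N →ₗ[R] P →ₗ[R] R) (α : N →ₗ[R] P →ₗ[R] M)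
    (h : ∀ f : Module.Dual R M, α.compr₂ f ∈ span R (Set.range B)) :
    ∃ c : ι → M, ∀ x y, α x y = ∑ j, B j x y • c j := by
  let v := Module.Free.chooseBasis R M
  choose d hd using fun l => (mem_span_range_iff_exists_fun R).mp (h (v.coord l))
  refine ⟨fun j => ∑ l, d l j • v l, fun x y => ?_⟩
  have hcoord : ∀ l, v.repr (α x y) l = ∑ j, d l j * B j x y := fun l => by
    simpa using congr($(hd l) x y).symm
  calc α x y = ∑ l, v.repr (α x y) l • v l := (v.sum_repr _).symm
    _ = ∑ j, B j x y • ∑ l, d l j • v l := by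
      simp only [hcoord, Finset.sum_smul, Finset.smul_sum, smul_smul, mul_comm]
      exact Finset.sum_comm

theorem exists_eq_sum_smul_of_forall_compr₂_mem_span_of_finiteDimensional {K : Type*} [Field K]
    [Module K N] [Module K P] [Module K M] [FiniteDimensional K N] [FiniteDimensional K P]
    (B : ι → N →ₗ[K] P →ₗ[K] K) (α : N →ₗ[K] P →ₗ[K] M)
    (h : ∀ f : Module.Dual K M, α.compr₂ f ∈ span K (Set.range B)) :
    ∃ c : ι → M, ∀ x y, α x y = ∑ j, B j x y • c j := by
  let M₀ := range (TensorProduct.lift α)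
  let α₀ := α.codRestrict₂ M₀.subtype M₀.injective_subtype
    fun x y => by rw [M₀.range_subtype]; exact ⟨x ⊗ₜ y, TensorProduct.lift.tmul x y⟩
  have hα₀ : ∀ x y, (α₀ x y : M) = α x y := codRestrict₂_apply α M₀.subtype _ _
  obtain ⟨c, hc⟩ := exists_eq_sum_smul_of_forall_compr₂_mem_span B α₀ fun f => by
    obtain ⟨g, hg⟩ := f.exists_extend
    convert h g using 1
    ext x y
    simp [← hg, hα₀]
  exact ⟨fun j => c j, fun x y => by simpa [← hα₀] using congr(((↑) : M₀ → M) $(hc x y))⟩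

end LinearMap

theorem invariant_symmetric_eq_sum_kappaS_smul_general
    {𝔽 : Type*} [Field 𝔽]
    {k : Type*} [LieRing k] [LieAlgebra 𝔽 k] [FiniteDimensional 𝔽 k]
    {M : Type*} [AddCommGroup M] [Module 𝔽 M]
    (κ : k →ₗ[𝔽] k →ₗ[𝔽] 𝔽)
    (m : ℕ) (S : Fin m → (k →ₗ[𝔽] k))
    (hspan : ∀ β : k →ₗ[𝔽] k →ₗ[𝔽] 𝔽,
      (∀ x y : k, β x y = β y x) →
      (∀ x y z : k, β ⁅x, y⁆ z = β x ⁅y, z⁆) →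
      β ∈ Submodule.span 𝔽 (Set.range fun j => κ ∘ₗ S j))
    (α : k →ₗ[𝔽] k →ₗ[𝔽] M)
    (hαsym : ∀ x y : k, α x y = α y x)
    (hαinv : ∀ x y z : k, α ⁅x, y⁆ z = α x ⁅y, z⁆) :
    ∃ c : Fin m → M, ∀ x y : k, α x y = ∑ j, κ (S j x) y • c j :=
  LinearMap.exists_eq_sum_smul_of_forall_compr₂_mem_span_of_finiteDimensional _ α fun f =>
    hspan (α.compr₂ f) (fun x y => by simp only [LinearMap.compr₂_apply, hαsym])
      fun x y z => by simp only [LinearMap.compr₂_apply, hαinv]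

/-- Let `k` be a finite-dimensional Lie algebra over a field `𝔽` of
characteristic zero with a nondegenerate invariant symmetric bilinear form `κ`, and let
`S₁, …, S_m ∈ cent₊(k)` (κ-symmetric centroid elements) be such that the forms
`κ_{Sⱼ} = κ(Sⱼ·,·)` form a basis of the space of invariant symmetric bilinear forms
on `k`.  Then for every symmetric invariant bilinear map `α : k × k → M` with values in
an `𝔽`-vector space `M` there exist `m₁, …, m_m ∈ M` such that
`α(x,y) = Σⱼ κ(Sⱼ x, y)·mⱼ` for all `x, y ∈ k`. -/
theorem invariant_symmetric_eq_sum_kappaS_smul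
    {𝔽 : Type*} [Field 𝔽] [CharZero 𝔽]
    {k : Type*} [LieRing k] [LieAlgebra 𝔽 k] [FiniteDimensional 𝔽 k]
    {M : Type*} [AddCommGroup M] [Module 𝔽 M]
    (κ : k →ₗ[𝔽] k →ₗ[𝔽] 𝔽)
    (hκsymm : ∀ x y : k, κ x y = κ y x)
    (hκinv : ∀ x y z : k, κ ⁅x, y⁆ z = κ x ⁅y, z⁆)
    (hκnd : ∀ x : k, (∀ y : k, κ x y = 0) → x = 0)
    (m : ℕ) (S : Fin m → (k →ₗ[𝔽] k))
    (hScent : ∀ j, ∀ x y : k, S j ⁅x, y⁆ = ⁅S j x, y⁆)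
    (hSsym : ∀ j, ∀ x y : k, κ (S j x) y = κ x (S j y))
    (hindep : LinearIndependent 𝔽 (fun j => κ ∘ₗ S j))
    (hspan : ∀ β : k →ₗ[𝔽] k →ₗ[𝔽] 𝔽,
      (∀ x y : k, β x y = β y x) →
      (∀ x y z : k, β ⁅x, y⁆ z = β x ⁅y, z⁆) →
      β ∈ Submodule.span 𝔽 (Set.range fun j => κ ∘ₗ S j))
    (α : k →ₗ[𝔽] k →ₗ[𝔽] M)
    (hαsym : ∀ x y : k, α x y = α y x)
    (hαinv : ∀ x y z : k, α ⁅x, y⁆ z = α x ⁅y, z⁆) :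
    ∃ c : Fin m → M, ∀ x y : k, α x y = ∑ j, κ (S j x) y • c j :=
  invariant_symmetric_eq_sum_kappaS_smul_general κ m S hspan α hαsym hαinv
end

section
/- Let A be a unital commutative associative 𝔽-algebra, M an 𝔽-vector space, f : A → M a linear map, and D a derivation of k with κ(D x, y) = −κ(x, D y) for all x, y ∈ k. Then the bilinear map η_{f,D} on the current algebra A ⊗ k determined by η_{f,D}(a⊗x, b⊗y) = f(ab)·κ(D x, y) is a 2-cocycle of A ⊗ k with values in M, and it is k-cocyclic. -/
/-!
A bilinear form `β` on `k` and a linear map `f : A → M` give the bilinear map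
`a ⊗ x, b ⊗ y ↦ β x y • f (a b)` on the current algebra `A ⊗ k`. Since `A` is commutative and
associative, the factor `f (a b c)` is common to all three terms of the cocycle identity on pure
tensors, so this map is antisymmetric, resp. a 2-cocycle, as soon as `β` is. For `β = κ ∘ D`,
antisymmetry is the skew-adjointness of `D` together with the symmetry of `κ`, and the cocycle
identity follows from the Leibniz rule for `D` and the invariance of `κ`.
-/

open TensorProduct

namespace CurrentAlgebra

variable {𝔽 k A M : Type*} [CommRing 𝔽] [LieRing k] [LieAlgebra 𝔽 k] [CommRing A] [Algebra 𝔽 A]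
  [AddCommGroup M] [Module 𝔽 M]

def currentForm (f : A →ₗ[𝔽] M) (β : k →ₗ[𝔽] k →ₗ[𝔽] 𝔽) :
    (A ⊗[𝔽] k) →ₗ[𝔽] (A ⊗[𝔽] k) →ₗ[𝔽] M :=
  curry <| lift ((LinearMap.lsmul 𝔽 M).flip.compl₁₂ (f ∘ₗ LinearMap.mul' 𝔽 A) (lift β)) ∘ₗ
    (tensorTensorTensorComm 𝔽 A k A k).toLinearMap

variable (f : A →ₗ[𝔽] M) (β : k →ₗ[𝔽] k →ₗ[𝔽] 𝔽)

@[simp]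
theorem currentForm_tmul (a b : A) (x y : k) :
    currentForm f β (a ⊗ₜ x) (b ⊗ₜ y) = β x y • f (a * b) := by
  simp [currentForm]

theorem currentForm_antisymm (hβ : ∀ x y, β x y = -β y x) (X Y : A ⊗[𝔽] k) :
    currentForm f β X Y = -currentForm f β Y X := by
  suffices currentForm f β = -(currentForm f β).flip from congr($this X Y)
  refine ext' fun a x => ext' fun b y => ?_
  simp [hβ x y, mul_comm a b]

theorem currentForm_cocycle (hβ : ∀ x y z, β ⁅x, y⁆ z = β x ⁅y, z⁆ - β y ⁅x, z⁆)
    (X Y Z : A ⊗[𝔽] k) :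
    currentForm f β ⁅X, Y⁆ Z = currentForm f β X ⁅Y, Z⁆ - currentForm f β Y ⁅X, Z⁆ := by
  induction X using TensorProduct.induction_on with
  | zero => simp
  | add X₁ X₂ h₁ h₂ => simp only [add_lie, map_add, LinearMap.add_apply, h₁, h₂]; abel
  | tmul a x =>
  induction Y using TensorProduct.induction_on with
  | zero => simp
  | add Y₁ Y₂ h₁ h₂ => simp only [add_lie, lie_add, map_add, LinearMap.add_apply, h₁, h₂]; abel
  | tmul b y =>
  induction Z using TensorProduct.induction_on with
  | zero => simp
  | add Z₁ Z₂ h₁ h₂ => simp only [lie_add, map_add, h₁, h₂]; abel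
  | tmul c z =>
    simp only [LieAlgebra.ExtendScalars.bracket_tmul, currentForm_tmul, hβ, sub_smul]
    rw [mul_left_comm b a c, mul_assoc]

end CurrentAlgebra

section InvariantForm

variable {𝔽 k : Type*} [CommRing 𝔽] [LieRing k] [LieAlgebra 𝔽 k] (κ : k →ₗ[𝔽] k →ₗ[𝔽] 𝔽)
  (D : k →ₗ[𝔽] k)

theorem comp_antisymm_of_symm_of_skewAdjoint (hκsymm : ∀ x y, κ x y = κ y x)
    (hDskew : ∀ x y, κ (D x) y = -κ x (D y)) (x y : k) :
    (κ ∘ₗ D) x y = -(κ ∘ₗ D) y x := by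
  simp [hDskew x y, hκsymm x]

theorem comp_cocycle_of_invariant_of_leibniz (hκinv : ∀ x y z, κ ⁅x, y⁆ z = κ x ⁅y, z⁆)
    (hDder : ∀ x y, D ⁅x, y⁆ = ⁅D x, y⁆ + ⁅x, D y⁆) (x y z : k) :
    (κ ∘ₗ D) ⁅x, y⁆ z = (κ ∘ₗ D) x ⁅y, z⁆ - (κ ∘ₗ D) y ⁅x, z⁆ := by
  have move_bracket : κ x ⁅D y, z⁆ = -κ (D y) ⁅x, z⁆ := by
    rw [← hκinv, ← lie_skew, map_neg, LinearMap.neg_apply, hκinv]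
  simp [hDder, hκinv, move_bracket, sub_eq_add_neg]

end InvariantForm

theorem eta_fD_is_k_cocyclic_two_cocycle_general
    {𝔽 : Type*} [Field 𝔽]
    {k : Type*} [LieRing k] [LieAlgebra 𝔽 k]
    {A : Type*} [CommRing A] [Algebra 𝔽 A]
    {M : Type*} [AddCommGroup M] [Module 𝔽 M]
    (κ : k →ₗ[𝔽] k →ₗ[𝔽] 𝔽)
    (hκsymm : ∀ x y : k, κ x y = κ y x)
    (hκinv : ∀ x y z : k, κ ⁅x, y⁆ z = κ x ⁅y, z⁆)
    (f : A →ₗ[𝔽] M)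
    (D : k →ₗ[𝔽] k)
    (hDder : ∀ x y : k, D ⁅x, y⁆ = ⁅D x, y⁆ + ⁅x, D y⁆)
    (hDskew : ∀ x y : k, κ (D x) y = - κ x (D y)) :
    ∃ η : (A ⊗[𝔽] k) →ₗ[𝔽] (A ⊗[𝔽] k) →ₗ[𝔽] M,
      (∀ (a b : A) (x y : k), η (a ⊗ₜ x) (b ⊗ₜ y) = κ (D x) y • f (a * b)) ∧
      (∀ X Y : A ⊗[𝔽] k, η X Y = - η Y X) ∧
      (∀ X Y Z : A ⊗[𝔽] k, η ⁅X, Y⁆ Z = η X ⁅Y, Z⁆ - η Y ⁅X, Z⁆) ∧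
      (∀ (a b : A),
        (∀ x y : k, η (a ⊗ₜ x) (b ⊗ₜ y) = - η (a ⊗ₜ y) (b ⊗ₜ x)) ∧
        (∀ x y z : k, η (a ⊗ₜ ⁅x, y⁆) (b ⊗ₜ z)
          = η (a ⊗ₜ x) (b ⊗ₜ ⁅y, z⁆) - η (a ⊗ₜ y) (b ⊗ₜ ⁅x, z⁆))) := by
  have antisymm := comp_antisymm_of_symm_of_skewAdjoint κ D hκsymm hDskew
  have cocycle := comp_cocycle_of_invariant_of_leibniz κ D hκinv hDder
  refine ⟨CurrentAlgebra.currentForm f (κ ∘ₗ D), fun a b x y => ?_,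
    CurrentAlgebra.currentForm_antisymm f _ antisymm,
    CurrentAlgebra.currentForm_cocycle f _ cocycle, fun a b => ⟨fun x y => ?_, fun x y z => ?_⟩⟩
  · simp
  · simp only [CurrentAlgebra.currentForm_tmul, antisymm x y, neg_smul]
  · simp only [CurrentAlgebra.currentForm_tmul, cocycle, sub_smul]

/-- Let `k` be a Lie algebra over a field `𝔽` of characteristic zero
with a nondegenerate invariant symmetric bilinear form `κ`, `A` a unital commutative
associative `𝔽`-algebra, `M` an `𝔽`-vector space, `f : A → M` a linear map, and `D` a
derivation of `k` with `κ(D x, y) = −κ(x, D y)`.  Then the bilinear map `η_{f,D}` on the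
current algebra `A ⊗ k` determined by `η_{f,D}(a⊗x, b⊗y) = f(ab)·κ(D x, y)` is a
2-cocycle of `A ⊗ k` with values in `M`, and it is `k`-cocyclic. -/
theorem eta_fD_is_k_cocyclic_two_cocycle
    {𝔽 : Type*} [Field 𝔽] [CharZero 𝔽]
    {k : Type*} [LieRing k] [LieAlgebra 𝔽 k]
    {A : Type*} [CommRing A] [Algebra 𝔽 A]
    {M : Type*} [AddCommGroup M] [Module 𝔽 M]
    (κ : k →ₗ[𝔽] k →ₗ[𝔽] 𝔽)
    (hκsymm : ∀ x y : k, κ x y = κ y x)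
    (hκinv : ∀ x y z : k, κ ⁅x, y⁆ z = κ x ⁅y, z⁆)
    (hκnd : ∀ x : k, (∀ y : k, κ x y = 0) → x = 0)
    (f : A →ₗ[𝔽] M)
    (D : k →ₗ[𝔽] k)
    (hDder : ∀ x y : k, D ⁅x, y⁆ = ⁅D x, y⁆ + ⁅x, D y⁆)
    (hDskew : ∀ x y : k, κ (D x) y = - κ x (D y)) :
    ∃ η : (A ⊗[𝔽] k) →ₗ[𝔽] (A ⊗[𝔽] k) →ₗ[𝔽] M,
      (∀ (a b : A) (x y : k), η (a ⊗ₜ x) (b ⊗ₜ y) = κ (D x) y • f (a * b)) ∧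
      (∀ X Y : A ⊗[𝔽] k, η X Y = - η Y X) ∧
      (∀ X Y Z : A ⊗[𝔽] k, η ⁅X, Y⁆ Z = η X ⁅Y, Z⁆ - η Y ⁅X, Z⁆) ∧
      (∀ (a b : A),
        (∀ x y : k, η (a ⊗ₜ x) (b ⊗ₜ y) = - η (a ⊗ₜ y) (b ⊗ₜ x)) ∧
        (∀ x y z : k, η (a ⊗ₜ ⁅x, y⁆) (b ⊗ₜ z)
          = η (a ⊗ₜ x) (b ⊗ₜ ⁅y, z⁆) - η (a ⊗ₜ y) (b ⊗ₜ ⁅x, z⁆))) :=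
  eta_fD_is_k_cocyclic_two_cocycle_general κ hκsymm hκinv f D hDder hDskew
end

section
/- Let A be a unital commutative associative 𝔽-algebra, M an 𝔽-vector space, F : A × A → M a Hochschild map, and S an element of the centroid of k with κ(S x, y) = κ(x, S y) for all x, y ∈ k. Then the bilinear map ξ_{F,S} on the current algebra A ⊗ k determined by ξ_{F,S}(a⊗x, b⊗y) = F(a,b)·κ(S x, y) is a 2-cocycle of A ⊗ k with values in M, and it is k-invariant. -/
/-!
The map `ξ_{F,S}` is the tensor product `F ⊗ β` of the Hochschild map `F` on `A` with the
bilinear form `β(x, y) = κ(S x, y)` on `k`, followed by `M ⊗ 𝔽 ≃ M`. Because `S` lies in the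
centroid and is `κ`-self-adjoint, `β` is again symmetric and invariant. Everything then reduces
to pure tensors: skew-symmetry of `F` and symmetry of `β` give skew-symmetry, invariance of `β`
gives `k`-invariance, and on `a ⊗ x, b ⊗ y, c ⊗ z` the cocycle identity is the Hochschild
identity `F(ab, c) = F(a, bc) + F(b, ac)` multiplied by
`β([x, y], z) = β(x, [y, z]) = -β(y, [x, z])`.
-/

open scoped TensorProduct

open LieAlgebra.ExtendScalars (bracket_tmul)

section CentroidTwist

variable {R : Type*} [CommRing R] {k : Type*} [LieRing k] [LieAlgebra R k]
  {N : Type*} [AddCommGroup N] [Module R N]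

theorem LinearMap.comp_symm_of_isSelfAdjoint {κ : k →ₗ[R] k →ₗ[R] N} {S : k →ₗ[R] k}
    (hκ : ∀ x y, κ x y = κ y x) (hS : ∀ x y, κ (S x) y = κ x (S y)) (x y : k) :
    (κ ∘ₗ S) x y = (κ ∘ₗ S) y x := by
  rw [comp_apply, comp_apply, hS, hκ]

theorem LinearMap.comp_lie_of_mem_centroid {κ : k →ₗ[R] k →ₗ[R] N} {S : k →ₗ[R] k}
    (hκ : ∀ x y z, κ ⁅x, y⁆ z = κ x ⁅y, z⁆) (hS : ∀ x y, S ⁅x, y⁆ = ⁅S x, y⁆) (x y z : k) :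
    (κ ∘ₗ S) ⁅x, y⁆ z = (κ ∘ₗ S) x ⁅y, z⁆ := by
  rw [comp_apply, comp_apply, hS, hκ]

end CentroidTwist

section CurrentAlgebra

variable {R : Type*} [CommRing R] {A : Type*} [CommRing A] [Algebra R A]
  {k : Type*} [LieRing k] [LieAlgebra R k] {M : Type*} [AddCommGroup M] [Module R M]

theorem lie_cocycle_of_tmul (ω : (A ⊗[R] k) →ₗ[R] (A ⊗[R] k) →ₗ[R] M)
    (h : ∀ (a b c : A) (x y z : k), ω ⁅a ⊗ₜ[R] x, b ⊗ₜ[R] y⁆ (c ⊗ₜ z) =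
      ω (a ⊗ₜ x) ⁅b ⊗ₜ[R] y, c ⊗ₜ[R] z⁆ - ω (b ⊗ₜ y) ⁅a ⊗ₜ[R] x, c ⊗ₜ[R] z⁆)
    (X Y Z : A ⊗[R] k) : ω ⁅X, Y⁆ Z = ω X ⁅Y, Z⁆ - ω Y ⁅X, Z⁆ := by
  induction X using TensorProduct.induction_on with
  | zero => simp
  | add X₁ X₂ h₁ h₂ =>
    simp only [add_lie, map_add, LinearMap.add_apply, h₁, h₂]
    abel
  | tmul a x =>
    induction Y using TensorProduct.induction_on with
    | zero => simp
    | add Y₁ Y₂ h₁ h₂ =>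
      simp only [lie_add, add_lie, map_add, LinearMap.add_apply, h₁, h₂]
      abel
    | tmul b y =>
      induction Z using TensorProduct.induction_on with
      | zero => simp
      | add Z₁ Z₂ h₁ h₂ =>
        simp only [lie_add, map_add, h₁, h₂]
        abel
      | tmul c z => exact h a b c x y z

noncomputable def currentForm (F : A →ₗ[R] A →ₗ[R] M) (β : k →ₗ[R] k →ₗ[R] R) :
    (A ⊗[R] k) →ₗ[R] (A ⊗[R] k) →ₗ[R] M :=
  (LinearMap.BilinMap.tmul F β).compr₂ (TensorProduct.rid R M)

variable {F : A →ₗ[R] A →ₗ[R] M} {β : k →ₗ[R] k →ₗ[R] R}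

variable (F β) in
@[simp]
theorem currentForm_tmul (a b : A) (x y : k) :
    currentForm F β (a ⊗ₜ x) (b ⊗ₜ y) = β x y • F a b := by
  simp [currentForm]

theorem currentForm_skew (hF : ∀ a b, F a b = -F b a) (hβ : ∀ x y, β x y = β y x)
    (X Y : A ⊗[R] k) : currentForm F β X Y = -currentForm F β Y X := by
  suffices currentForm F β = -(currentForm F β).flip from congr($this X Y)
  ext a x b y
  simp [hF a b, hβ x y]

theorem currentForm_tmul_lie (hβ : ∀ x y z, β ⁅x, y⁆ z = β x ⁅y, z⁆) (a b : A) (x y z : k) :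
    currentForm F β (a ⊗ₜ ⁅x, y⁆) (b ⊗ₜ z) = currentForm F β (a ⊗ₜ x) (b ⊗ₜ ⁅y, z⁆) := by
  simp [hβ]

theorem currentForm_lie_cocycle (hF : ∀ a b c, F (a * b) c = F a (b * c) + F b (a * c))
    (hβ : ∀ x y z, β ⁅x, y⁆ z = β x ⁅y, z⁆) (X Y Z : A ⊗[R] k) :
    currentForm F β ⁅X, Y⁆ Z = currentForm F β X ⁅Y, Z⁆ - currentForm F β Y ⁅X, Z⁆ := by
  refine lie_cocycle_of_tmul _ (fun a b c x y z => ?_) X Y Z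
  have hβ_swap : β ⁅x, y⁆ z = -β y ⁅x, z⁆ := by
    rw [← lie_skew, map_neg, LinearMap.neg_apply, hβ]
  simp only [bracket_tmul, currentForm_tmul, hF]
  rw [smul_add, sub_eq_add_neg, ← neg_smul, ← hβ_swap, ← hβ]

end CurrentAlgebra

theorem xi_FS_is_k_invariant_two_cocycle_general
    {𝔽 : Type*} [Field 𝔽]
    {k : Type*} [LieRing k] [LieAlgebra 𝔽 k]
    {A : Type*} [CommRing A] [Algebra 𝔽 A]
    {M : Type*} [AddCommGroup M] [Module 𝔽 M]
    (κ : k →ₗ[𝔽] k →ₗ[𝔽] 𝔽)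
    (hκsymm : ∀ x y : k, κ x y = κ y x)
    (hκinv : ∀ x y z : k, κ ⁅x, y⁆ z = κ x ⁅y, z⁆)
    (F : A →ₗ[𝔽] A →ₗ[𝔽] M)
    (hFskew : ∀ a b : A, F a b = - F b a)
    (hFhoch : ∀ a b c : A, F (a * b) c = F a (b * c) + F b (a * c))
    (S : k →ₗ[𝔽] k)
    (hScent : ∀ x y : k, S ⁅x, y⁆ = ⁅S x, y⁆)
    (hSsym : ∀ x y : k, κ (S x) y = κ x (S y)) :
    ∃ ξ : (A ⊗[𝔽] k) →ₗ[𝔽] (A ⊗[𝔽] k) →ₗ[𝔽] M,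
      (∀ (a b : A) (x y : k), ξ (a ⊗ₜ x) (b ⊗ₜ y) = κ (S x) y • F a b) ∧
      (∀ X Y : A ⊗[𝔽] k, ξ X Y = - ξ Y X) ∧
      (∀ X Y Z : A ⊗[𝔽] k, ξ ⁅X, Y⁆ Z = ξ X ⁅Y, Z⁆ - ξ Y ⁅X, Z⁆) ∧
      (∀ (a b : A) (x y z : k),
        ξ (a ⊗ₜ ⁅x, y⁆) (b ⊗ₜ z) = ξ (a ⊗ₜ x) (b ⊗ₜ ⁅y, z⁆)) := by
  have hβsymm := LinearMap.comp_symm_of_isSelfAdjoint hκsymm hSsym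
  have hβinv := LinearMap.comp_lie_of_mem_centroid hκinv hScent
  exact ⟨currentForm F (κ ∘ₗ S), currentForm_tmul F _, currentForm_skew hFskew hβsymm,
    currentForm_lie_cocycle hFhoch hβinv, currentForm_tmul_lie hβinv⟩

/-- Let `k` be a Lie algebra over a field `𝔽` of characteristic zero
with a nondegenerate invariant symmetric bilinear form `κ`, `A` a unital commutative
associative `𝔽`-algebra, `M` an `𝔽`-vector space, `F : A × A → M` a Hochschild map, and
`S` an element of the centroid of `k` with `κ(S x, y) = κ(x, S y)`.  Then the bilinear
map `ξ_{F,S}` on the current algebra `A ⊗ k` determined by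
`ξ_{F,S}(a⊗x, b⊗y) = F(a,b)·κ(S x, y)` is a 2-cocycle of `A ⊗ k` with values in `M`,
and it is `k`-invariant. -/
theorem xi_FS_is_k_invariant_two_cocycle
    {𝔽 : Type*} [Field 𝔽] [CharZero 𝔽]
    {k : Type*} [LieRing k] [LieAlgebra 𝔽 k]
    {A : Type*} [CommRing A] [Algebra 𝔽 A]
    {M : Type*} [AddCommGroup M] [Module 𝔽 M]
    (κ : k →ₗ[𝔽] k →ₗ[𝔽] 𝔽)
    (hκsymm : ∀ x y : k, κ x y = κ y x)
    (hκinv : ∀ x y z : k, κ ⁅x, y⁆ z = κ x ⁅y, z⁆)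
    (hκnd : ∀ x : k, (∀ y : k, κ x y = 0) → x = 0)
    (F : A →ₗ[𝔽] A →ₗ[𝔽] M)
    (hFskew : ∀ a b : A, F a b = - F b a)
    (hFhoch : ∀ a b c : A, F (a * b) c = F a (b * c) + F b (a * c))
    (S : k →ₗ[𝔽] k)
    (hScent : ∀ x y : k, S ⁅x, y⁆ = ⁅S x, y⁆)
    (hSsym : ∀ x y : k, κ (S x) y = κ x (S y)) :
    ∃ ξ : (A ⊗[𝔽] k) →ₗ[𝔽] (A ⊗[𝔽] k) →ₗ[𝔽] M,
      (∀ (a b : A) (x y : k), ξ (a ⊗ₜ x) (b ⊗ₜ y) = κ (S x) y • F a b) ∧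
      (∀ X Y : A ⊗[𝔽] k, ξ X Y = - ξ Y X) ∧
      (∀ X Y Z : A ⊗[𝔽] k, ξ ⁅X, Y⁆ Z = ξ X ⁅Y, Z⁆ - ξ Y ⁅X, Z⁆) ∧
      (∀ (a b : A) (x y z : k),
        ξ (a ⊗ₜ ⁅x, y⁆) (b ⊗ₜ z) = ξ (a ⊗ₜ x) (b ⊗ₜ ⁅y, z⁆)) :=
  xi_FS_is_k_invariant_two_cocycle_general κ hκsymm hκinv F hFskew hFhoch S hScent hSsym
end

section
/- Assume k is perfect and let ω be a k-cocyclic 2-cocycle of the current algebra A ⊗ k with values in an 𝔽-vector space M. Then for all a, b ∈ A: ω_{a,b} = ω_{b,a} and ω_{ab,1} = ω_{a,b} = ω_{1,ab}. -/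
/-! Skew-symmetry of `ω` combined with skew-symmetry of `ω_{b,a}` gives `ω_{a,b} = ω_{b,a}`.
Comparing the cocycle identity of `ω` on `a ⊗ u, 1 ⊗ v, b ⊗ y` with that of `ω_{a,b}` on
`u, v, y` gives `ω_{a,b}(v, [u, y]) = ω_{1,ab}(v, [u, y])`; as `k` is spanned by brackets,
`ω_{a,b} = ω_{1,ab}`, and applying this also to the pair `(ab, 1)` gives `ω_{ab,1} = ω_{1,ab}`. -/

open scoped TensorProduct

namespace CurrentAlgebra

variable {R : Type*} [CommRing R] {L : Type*} [LieRing L] [LieAlgebra R L]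
  {A : Type*} [CommRing A] [Algebra R A] {M : Type*} [AddCommGroup M] [Module R M]
  (ω : (A ⊗[R] L) →ₗ[R] (A ⊗[R] L) →ₗ[R] M)

theorem tmul_tmul_comm (hskew : ∀ X Y, ω X Y = -ω Y X) {a b : A}
    (hba : ∀ x y : L, ω (b ⊗ₜ x) (a ⊗ₜ y) = -ω (b ⊗ₜ y) (a ⊗ₜ x)) (x y : L) :
    ω (a ⊗ₜ x) (b ⊗ₜ y) = ω (b ⊗ₜ x) (a ⊗ₜ y) := by
  rw [hskew, hba y x, neg_neg]

theorem tmul_tmul_bracket_eq_one_mul (hcoc : ∀ X Y Z, ω ⁅X, Y⁆ Z = ω X ⁅Y, Z⁆ - ω Y ⁅X, Z⁆)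
    {a b : A} (hab : ∀ x y z : L,
      ω (a ⊗ₜ ⁅x, y⁆) (b ⊗ₜ z) = ω (a ⊗ₜ x) (b ⊗ₜ ⁅y, z⁆) - ω (a ⊗ₜ y) (b ⊗ₜ ⁅x, z⁆))
    (v u y : L) :
    ω (a ⊗ₜ v) (b ⊗ₜ ⁅u, y⁆) = ω ((1 : A) ⊗ₜ v) ((a * b) ⊗ₜ ⁅u, y⁆) := by
  have hglobal := hcoc (a ⊗ₜ u) ((1 : A) ⊗ₜ v) (b ⊗ₜ y)
  simp only [LieAlgebra.ExtendScalars.bracket_tmul, mul_one, one_mul] at hglobal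
  have hlocal := hab u v y
  rw [hglobal] at hlocal
  exact (sub_right_injective hlocal).symm

theorem tmul_tmul_eq_one_mul
    (hperf : ∀ z : L, z ∈ Submodule.span R {w : L | ∃ x y : L, ⁅x, y⁆ = w})
    (hcoc : ∀ X Y Z, ω ⁅X, Y⁆ Z = ω X ⁅Y, Z⁆ - ω Y ⁅X, Z⁆)
    {a b : A} (hab : ∀ x y z : L,
      ω (a ⊗ₜ ⁅x, y⁆) (b ⊗ₜ z) = ω (a ⊗ₜ x) (b ⊗ₜ ⁅y, z⁆) - ω (a ⊗ₜ y) (b ⊗ₜ ⁅x, z⁆))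
    (v z : L) :
    ω (a ⊗ₜ v) (b ⊗ₜ z) = ω ((1 : A) ⊗ₜ v) ((a * b) ⊗ₜ z) := by
  refine LinearMap.eqOn_span (f := (ω (a ⊗ₜ v)).comp (TensorProduct.mk R A L b))
    (g := (ω ((1 : A) ⊗ₜ v)).comp (TensorProduct.mk R A L (a * b))) ?_ (hperf z)
  rintro _ ⟨u, y, rfl⟩
  exact tmul_tmul_bracket_eq_one_mul ω hcoc hab v u y

end CurrentAlgebra

open CurrentAlgebra in
theorem k_cocyclic_symmetric_and_depends_on_product_general
    {𝔽 : Type*} [Field 𝔽]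
    {k : Type*} [LieRing k] [LieAlgebra 𝔽 k]
    {A : Type*} [CommRing A] [Algebra 𝔽 A]
    {M : Type*} [AddCommGroup M] [Module 𝔽 M]
    (hperf : ∀ z : k, z ∈ Submodule.span 𝔽 {w : k | ∃ x y : k, ⁅x, y⁆ = w})
    (ω : (A ⊗[𝔽] k) →ₗ[𝔽] (A ⊗[𝔽] k) →ₗ[𝔽] M)
    (hωskew : ∀ X Y : A ⊗[𝔽] k, ω X Y = - ω Y X)
    (hωcoc : ∀ X Y Z : A ⊗[𝔽] k, ω ⁅X, Y⁆ Z = ω X ⁅Y, Z⁆ - ω Y ⁅X, Z⁆)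
    (hcocyclic : ∀ (a b : A),
      (∀ x y : k, ω (a ⊗ₜ x) (b ⊗ₜ y) = - ω (a ⊗ₜ y) (b ⊗ₜ x)) ∧
      (∀ x y z : k, ω (a ⊗ₜ ⁅x, y⁆) (b ⊗ₜ z)
        = ω (a ⊗ₜ x) (b ⊗ₜ ⁅y, z⁆) - ω (a ⊗ₜ y) (b ⊗ₜ ⁅x, z⁆))) :
    ∀ (a b : A) (x y : k),
      ω (a ⊗ₜ x) (b ⊗ₜ y) = ω (b ⊗ₜ x) (a ⊗ₜ y) ∧
      ω ((a * b) ⊗ₜ x) ((1 : A) ⊗ₜ y) = ω (a ⊗ₜ x) (b ⊗ₜ y) ∧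
      ω (a ⊗ₜ x) (b ⊗ₜ y) = ω ((1 : A) ⊗ₜ x) ((a * b) ⊗ₜ y) := by
  intro a b x y
  have hab := tmul_tmul_eq_one_mul ω hperf hωcoc (hcocyclic a b).2 x y
  refine ⟨tmul_tmul_comm ω hωskew (hcocyclic b a).1 x y, ?_, hab⟩
  calc ω ((a * b) ⊗ₜ x) ((1 : A) ⊗ₜ y)
      = ω ((1 : A) ⊗ₜ x) ((a * b * 1) ⊗ₜ y) :=
        tmul_tmul_eq_one_mul ω hperf hωcoc (hcocyclic (a * b) 1).2 x y
    _ = ω (a ⊗ₜ x) (b ⊗ₜ y) := by rw [mul_one, hab]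

/-- Let `k` be a perfect Lie algebra over a field `𝔽` of characteristic
zero, `A` a unital commutative associative `𝔽`-algebra and `ω` a `k`-cocyclic 2-cocycle
of the current algebra `A ⊗ k` with values in an `𝔽`-vector space `M` (here
`ω_{a,b}(x,y) := ω(a⊗x, b⊗y)`).  Then for all `a, b ∈ A`:
`ω_{a,b} = ω_{b,a}` and `ω_{ab,1} = ω_{a,b} = ω_{1,ab}`. -/
theorem k_cocyclic_symmetric_and_depends_on_product
    {𝔽 : Type*} [Field 𝔽] [CharZero 𝔽]
    {k : Type*} [LieRing k] [LieAlgebra 𝔽 k]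
    {A : Type*} [CommRing A] [Algebra 𝔽 A]
    {M : Type*} [AddCommGroup M] [Module 𝔽 M]
    (hperf : ∀ z : k, z ∈ Submodule.span 𝔽 {w : k | ∃ x y : k, ⁅x, y⁆ = w})
    (ω : (A ⊗[𝔽] k) →ₗ[𝔽] (A ⊗[𝔽] k) →ₗ[𝔽] M)
    (hωskew : ∀ X Y : A ⊗[𝔽] k, ω X Y = - ω Y X)
    (hωcoc : ∀ X Y Z : A ⊗[𝔽] k, ω ⁅X, Y⁆ Z = ω X ⁅Y, Z⁆ - ω Y ⁅X, Z⁆)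
    (hcocyclic : ∀ (a b : A),
      (∀ x y : k, ω (a ⊗ₜ x) (b ⊗ₜ y) = - ω (a ⊗ₜ y) (b ⊗ₜ x)) ∧
      (∀ x y z : k, ω (a ⊗ₜ ⁅x, y⁆) (b ⊗ₜ z)
        = ω (a ⊗ₜ x) (b ⊗ₜ ⁅y, z⁆) - ω (a ⊗ₜ y) (b ⊗ₜ ⁅x, z⁆))) :
    ∀ (a b : A) (x y : k),
      ω (a ⊗ₜ x) (b ⊗ₜ y) = ω (b ⊗ₜ x) (a ⊗ₜ y) ∧
      ω ((a * b) ⊗ₜ x) ((1 : A) ⊗ₜ y) = ω (a ⊗ₜ x) (b ⊗ₜ y) ∧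
      ω (a ⊗ₜ x) (b ⊗ₜ y) = ω ((1 : A) ⊗ₜ x) ((a * b) ⊗ₜ y) :=
  k_cocyclic_symmetric_and_depends_on_product_general hperf ω hωskew hωcoc hcocyclic
end

section
/- Assume k is perfect and let ω be a k-invariant 2-cocycle of the current algebra A ⊗ k with values in an 𝔽-vector space M. Then for all a, b, c ∈ A: ω_{a,b} = −ω_{b,a} and ω_{ab,c} = ω_{a,bc} + ω_{b,ac}. -/
/-!
An invariant bilinear map `β` on a Lie algebra satisfies `β y ⁅u, v⁆ = β ⁅u, v⁆ y`, so it is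
symmetric when `k` is perfect. Since `ω_{b,a}` is invariant, skew-symmetry of `ω` gives
`ω_{a,b}(x, y) = -ω_{b,a}(y, x) = -ω_{b,a}(x, y)`. Evaluating the cocycle identity at
`a ⊗ u, b ⊗ v, c ⊗ y` and moving the brackets with invariance yields the Hochschild identity
for `x = ⁅u, v⁆`, hence for all `x` by perfectness.
-/

open TensorProduct

section PerfectLieAlgebra

variable {R k M : Type*} [CommRing R] [LieRing k] [LieAlgebra R k] [AddCommGroup M] [Module R M]

theorem LinearMap.ext_of_perfect
    (hperf : ∀ z : k, z ∈ Submodule.span R {w : k | ∃ x y : k, ⁅x, y⁆ = w})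
    {f g : k →ₗ[R] M} (h : ∀ u v : k, f ⁅u, v⁆ = g ⁅u, v⁆) : f = g :=
  LinearMap.ext_on (Submodule.eq_top_iff'.mpr hperf) (by rintro _ ⟨u, v, rfl⟩; exact h u v)

theorem apply_lie_comm_of_invariant (β : k →ₗ[R] k →ₗ[R] M)
    (hβ : ∀ x y z : k, β ⁅x, y⁆ z = β x ⁅y, z⁆) (y u v : k) :
    β y ⁅u, v⁆ = β ⁅u, v⁆ y :=
  calc β y ⁅u, v⁆ = β ⁅y, u⁆ v := (hβ y u v).symm
    _ = -β ⁅u, y⁆ v := by rw [← lie_skew, map_neg, LinearMap.neg_apply]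
    _ = -β u ⁅y, v⁆ := by rw [hβ]
    _ = β u ⁅v, y⁆ := by rw [← lie_skew v y, map_neg]
    _ = β ⁅u, v⁆ y := (hβ u v y).symm

theorem symm_of_invariant_of_perfect
    (hperf : ∀ z : k, z ∈ Submodule.span R {w : k | ∃ x y : k, ⁅x, y⁆ = w})
    (β : k →ₗ[R] k →ₗ[R] M) (hβ : ∀ x y z : k, β ⁅x, y⁆ z = β x ⁅y, z⁆) (x y : k) :
    β x y = β y x :=
  LinearMap.congr_fun
    (LinearMap.ext_of_perfect (f := β x) (g := β.flip x) hperf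
      (apply_lie_comm_of_invariant β hβ x)) y

end PerfectLieAlgebra

section CurrentAlgebra

variable {R k A M : Type*} [CommRing R] [LieRing k] [LieAlgebra R k] [CommRing A] [Algebra R A]
  [AddCommGroup M] [Module R M]

/-- The paper's `ω_{a,b}`. -/
def currentComponent (ω : (A ⊗[R] k) →ₗ[R] (A ⊗[R] k) →ₗ[R] M) (a b : A) :
    k →ₗ[R] k →ₗ[R] M :=
  ω.compl₁₂ (mk R A k a) (mk R A k b)

@[simp]
theorem currentComponent_apply (ω : (A ⊗[R] k) →ₗ[R] (A ⊗[R] k) →ₗ[R] M) (a b : A) (x y : k) :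
    currentComponent ω a b x y = ω (a ⊗ₜ x) (b ⊗ₜ y) :=
  rfl

theorem hochschild_apply_lie (ω : (A ⊗[R] k) →ₗ[R] (A ⊗[R] k) →ₗ[R] M)
    (hωcoc : ∀ X Y Z : A ⊗[R] k, ω ⁅X, Y⁆ Z = ω X ⁅Y, Z⁆ - ω Y ⁅X, Z⁆)
    (hinvariant : ∀ (a b : A) (x y z : k),
      ω (a ⊗ₜ ⁅x, y⁆) (b ⊗ₜ z) = ω (a ⊗ₜ x) (b ⊗ₜ ⁅y, z⁆))
    (a b c : A) (u v y : k) :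
    ω ((a * b) ⊗ₜ ⁅u, v⁆) (c ⊗ₜ y)
      = ω (a ⊗ₜ ⁅u, v⁆) ((b * c) ⊗ₜ y) + ω (b ⊗ₜ ⁅u, v⁆) ((a * c) ⊗ₜ y) := by
  have hcoc := hωcoc (a ⊗ₜ u) (b ⊗ₜ v) (c ⊗ₜ y)
  simp only [LieAlgebra.ExtendScalars.bracket_tmul] at hcoc
  rw [hcoc, ← hinvariant a, ← hinvariant b (a * c) v u y, ← lie_skew v u, tmul_neg, map_neg,
    LinearMap.neg_apply, sub_neg_eq_add]

end CurrentAlgebra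

theorem k_invariant_skew_and_hochschild_general
    {𝔽 : Type*} [Field 𝔽]
    {k : Type*} [LieRing k] [LieAlgebra 𝔽 k]
    {A : Type*} [CommRing A] [Algebra 𝔽 A]
    {M : Type*} [AddCommGroup M] [Module 𝔽 M]
    (hperf : ∀ z : k, z ∈ Submodule.span 𝔽 {w : k | ∃ x y : k, ⁅x, y⁆ = w})
    (ω : (A ⊗[𝔽] k) →ₗ[𝔽] (A ⊗[𝔽] k) →ₗ[𝔽] M)
    (hωskew : ∀ X Y : A ⊗[𝔽] k, ω X Y = - ω Y X)
    (hωcoc : ∀ X Y Z : A ⊗[𝔽] k, ω ⁅X, Y⁆ Z = ω X ⁅Y, Z⁆ - ω Y ⁅X, Z⁆)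
    (hinvariant : ∀ (a b : A) (x y z : k),
      ω (a ⊗ₜ ⁅x, y⁆) (b ⊗ₜ z) = ω (a ⊗ₜ x) (b ⊗ₜ ⁅y, z⁆)) :
    ∀ (a b c : A) (x y : k),
      ω (a ⊗ₜ x) (b ⊗ₜ y) = - ω (b ⊗ₜ x) (a ⊗ₜ y) ∧
      ω ((a * b) ⊗ₜ x) (c ⊗ₜ y)
        = ω (a ⊗ₜ x) ((b * c) ⊗ₜ y) + ω (b ⊗ₜ x) ((a * c) ⊗ₜ y) := by
  intro a b c x y
  constructor
  · have hsymm := symm_of_invariant_of_perfect hperf (currentComponent ω b a)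
      (hinvariant b a) y x
    simp only [currentComponent_apply] at hsymm
    rw [hωskew, hsymm]
  · have hlie : ((currentComponent ω (a * b) c).flip y
        = ((currentComponent ω a (b * c)) + (currentComponent ω b (a * c))).flip y) :=
      LinearMap.ext_of_perfect hperf (hochschild_apply_lie ω hωcoc hinvariant a b c · · y)
    simpa using LinearMap.congr_fun hlie x

/-- Let `k` be a perfect Lie algebra over a field `𝔽` of characteristic
zero, `A` a unital commutative associative `𝔽`-algebra and `ω` a `k`-invariant 2-cocycle
of the current algebra `A ⊗ k` with values in an `𝔽`-vector space `M` (here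
`ω_{a,b}(x,y) := ω(a⊗x, b⊗y)`).  Then for all `a, b, c ∈ A`:
`ω_{a,b} = −ω_{b,a}` and `ω_{ab,c} = ω_{a,bc} + ω_{b,ac}`. -/
theorem k_invariant_skew_and_hochschild
    {𝔽 : Type*} [Field 𝔽] [CharZero 𝔽]
    {k : Type*} [LieRing k] [LieAlgebra 𝔽 k]
    {A : Type*} [CommRing A] [Algebra 𝔽 A]
    {M : Type*} [AddCommGroup M] [Module 𝔽 M]
    (hperf : ∀ z : k, z ∈ Submodule.span 𝔽 {w : k | ∃ x y : k, ⁅x, y⁆ = w})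
    (ω : (A ⊗[𝔽] k) →ₗ[𝔽] (A ⊗[𝔽] k) →ₗ[𝔽] M)
    (hωskew : ∀ X Y : A ⊗[𝔽] k, ω X Y = - ω Y X)
    (hωcoc : ∀ X Y Z : A ⊗[𝔽] k, ω ⁅X, Y⁆ Z = ω X ⁅Y, Z⁆ - ω Y ⁅X, Z⁆)
    (hinvariant : ∀ (a b : A) (x y z : k),
      ω (a ⊗ₜ ⁅x, y⁆) (b ⊗ₜ z) = ω (a ⊗ₜ x) (b ⊗ₜ ⁅y, z⁆)) :
    ∀ (a b c : A) (x y : k),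
      ω (a ⊗ₜ x) (b ⊗ₜ y) = - ω (b ⊗ₜ x) (a ⊗ₜ y) ∧
      ω ((a * b) ⊗ₜ x) (c ⊗ₜ y)
        = ω (a ⊗ₜ x) ((b * c) ⊗ₜ y) + ω (b ⊗ₜ x) ((a * c) ⊗ₜ y) :=
  k_invariant_skew_and_hochschild_general hperf ω hωskew hωcoc hinvariant
end

section
/- Assume k is finite-dimensional and perfect and κ is derivation invariant. Then every 2-cocycle ω of the current algebra A ⊗ k with values in an 𝔽-vector space M can be written as ω = ω₁ + ω₂, where ω₁ is a k-invariant 2-cocycle and ω₂ is a k-cocyclic 2-cocycle of A ⊗ k. -/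
/-!
Write `ω_{a,b}(x, y) = ω (a ⊗ x) (b ⊗ y)` and split `ω` into its parts symmetric and
antisymmetric under `x ↔ y`. The cocycle identity makes each `ω_{1,c}` satisfy the cocycle
identity of `k`; through `κ` it is represented by a derivation, so derivation invariance makes
`ω_{1,c}` skew and the symmetric part vanishes on `(1 ⊗ k) × (A ⊗ k)`. Perfectness of `k` upgrades
the cocycle identity to the Leibniz rule `ω_{ab,c} + ω_{1,abc} = ω_{a,bc} + ω_{b,ac}`; for the
symmetric part, whose components are invariant, this rule is exactly the cocycle identity.
The antisymmetric part is then a cocycle whose components are symmetric in `a, b`, and perfectness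
forces `ω_{a,b} = ω_{ab,1} = ω_{1,ab}`, a 2-cocycle of `k`.
-/

open scoped TensorProduct

namespace LinearMap

variable {R L M : Type*} [CommRing R] [LieRing L] [LieAlgebra R L] [AddCommGroup M] [Module R M]

def IsLieCocycle (θ : L →ₗ[R] L →ₗ[R] M) : Prop :=
  ∀ x y z : L, θ ⁅x, y⁆ z = θ x ⁅y, z⁆ - θ y ⁅x, z⁆

variable (R L M) in
def lieTwoCocycles : Submodule R (L →ₗ[R] L →ₗ[R] M) where
  carrier := {θ | (∀ x y : L, θ x y = -θ y x) ∧ θ.IsLieCocycle}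
  add_mem' := fun ⟨hskew, hcoc⟩ ⟨hskew', hcoc'⟩ =>
    ⟨fun x y => by simp only [add_apply, hskew x y, hskew' x y, neg_add],
      fun x y z => by simp only [add_apply, hcoc x y z, hcoc' x y z]; abel⟩
  zero_mem' := ⟨fun _ _ => by simp, fun _ _ _ => by simp⟩
  smul_mem' r _ := fun ⟨hskew, hcoc⟩ =>
    ⟨fun x y => by simp only [smul_apply, hskew x y, smul_neg],
      fun x y z => by simp only [smul_apply, hcoc x y z, smul_sub]⟩

lemma mem_lieTwoCocycles {θ : L →ₗ[R] L →ₗ[R] M} :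
    θ ∈ lieTwoCocycles R L M ↔ (∀ x y : L, θ x y = -θ y x) ∧ θ.IsLieCocycle :=
  Iff.rfl

lemma IsLieCocycle.compr₂ {N : Type*} [AddCommGroup N] [Module R N] {θ : L →ₗ[R] L →ₗ[R] M}
    (hθ : θ.IsLieCocycle) (f : M →ₗ[R] N) : (θ.compr₂ f).IsLieCocycle := fun x y z => by
  simp only [compr₂_apply, hθ x y z, map_sub]

lemma ext_of_span_lie_eq_top
    (hperf : Submodule.span R {w : L | ∃ x y : L, ⁅x, y⁆ = w} = ⊤) {f g : L →ₗ[R] M}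
    (h : ∀ x y : L, f ⁅x, y⁆ = g ⁅x, y⁆) : f = g :=
  ext_on hperf <| by rintro _ ⟨x, y, rfl⟩; exact h x y

lemma apply_lie_eq_zero_of_apply_lie_comm [Invertible (2 : R)] {Δ : L →ₗ[R] L →ₗ[R] M}
    (h : ∀ x y z : L, Δ x ⁅y, z⁆ = Δ y ⁅x, z⁆) (x y z : L) : Δ x ⁅y, z⁆ = 0 := by
  have antisymm : ∀ x y z : L, Δ x ⁅y, z⁆ = -Δ x ⁅z, y⁆ := fun x y z => by
    rw [← map_neg, lie_skew]
  -- symmetric in the first two arguments and antisymmetric in the last two, hence alternating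
  have hneg : Δ x ⁅y, z⁆ = -Δ x ⁅y, z⁆ :=
    calc Δ x ⁅y, z⁆ = Δ y ⁅x, z⁆ := h x y z
      _ = -Δ y ⁅z, x⁆ := antisymm y x z
      _ = -Δ z ⁅y, x⁆ := by rw [h]
      _ = Δ z ⁅x, y⁆ := by rw [antisymm z y x, neg_neg]
      _ = Δ x ⁅z, y⁆ := h z x y
      _ = -Δ x ⁅y, z⁆ := antisymm x z y
  have : (2 : R) • Δ x ⁅y, z⁆ = (2 : R) • 0 := by
    rw [smul_zero, two_smul, ← eq_neg_iff_add_eq_zero]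
    exact hneg
  exact (isUnit_of_invertible (2 : R)).smul_left_cancel.1 this

lemma IsLieCocycle.isDerivation {κ : L →ₗ[R] L →ₗ[R] R}
    (hκinv : ∀ x y z : L, κ ⁅x, y⁆ z = κ x ⁅y, z⁆) (hκnd : κ.SeparatingLeft)
    {T : L →ₗ[R] L →ₗ[R] R} (hT : T.IsLieCocycle) {ψ : L →ₗ[R] L}
    (hψ : ∀ u v : L, κ (ψ u) v = T u v) (x y : L) : ψ ⁅x, y⁆ = ⁅ψ x, y⁆ + ⁅x, ψ y⁆ := by
  refine sub_eq_zero.1 <| hκnd _ fun z => ?_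
  rw [map_sub, map_add, sub_apply, add_apply, hψ, ← lie_skew x (ψ y), map_neg, neg_apply,
    hκinv, hκinv, hψ, hψ, hT]
  ring

end LinearMap

section

variable {K L M : Type*} [Field K] [LieRing L] [LieAlgebra K L] [FiniteDimensional K L]
  [AddCommGroup M] [Module K M] {κ : L →ₗ[K] L →ₗ[K] K}

lemma LinearMap.IsLieCocycle.apply_swap (hκsymm : ∀ x y : L, κ x y = κ y x)
    (hκinv : ∀ x y z : L, κ ⁅x, y⁆ z = κ x ⁅y, z⁆) (hκnd : κ.SeparatingLeft)
    (hderinv : ∀ D : L →ₗ[K] L, (∀ x y : L, D ⁅x, y⁆ = ⁅D x, y⁆ + ⁅x, D y⁆) →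
      ∀ x y : L, κ (D x) y = -κ x (D y))
    {T : L →ₗ[K] L →ₗ[K] M} (hT : T.IsLieCocycle) (x y : L) : T y x = -T x y := by
  rw [eq_neg_iff_add_eq_zero, ← Module.forall_dual_apply_eq_zero_iff K]
  intro f
  have hnd : κ.Nondegenerate := ⟨hκnd, fun y hy => hκnd y fun x => hκsymm y x ▸ hy x⟩
  let ψ := (LinearMap.BilinForm.toDual κ hnd).symm.toLinearMap ∘ₗ T.compr₂ f
  have hψ : ∀ u v, κ (ψ u) v = T.compr₂ f u v := fun u v =>
    LinearMap.BilinForm.apply_toDual_symm_apply (hB := hnd) _ v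
  have := hderinv ψ ((hT.compr₂ f).isDerivation hκinv hκnd hψ) y x
  rw [hψ, hκsymm y, hψ, compr₂_apply, compr₂_apply] at this
  rw [map_add, this, neg_add_cancel]

end

namespace CurrentAlgebra

open LinearMap TensorProduct

variable {R A L M : Type*} [CommRing R] [CommRing A] [Algebra R A] [LieRing L] [LieAlgebra R L]
  [AddCommGroup M] [Module R M]

def component (θ : A ⊗[R] L →ₗ[R] A ⊗[R] L →ₗ[R] M) (a b : A) : L →ₗ[R] L →ₗ[R] M :=
  θ.compl₁₂ (TensorProduct.mk R A L a) (TensorProduct.mk R A L b)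

@[simp]
lemma component_apply (θ : A ⊗[R] L →ₗ[R] A ⊗[R] L →ₗ[R] M) (a b : A) (x y : L) :
    component θ a b x y = θ (a ⊗ₜ x) (b ⊗ₜ y) :=
  rfl

def swapFactors (θ : A ⊗[R] L →ₗ[R] A ⊗[R] L →ₗ[R] M) : A ⊗[R] L →ₗ[R] A ⊗[R] L →ₗ[R] M :=
  curry <| lift θ ∘ₗ (tensorTensorTensorComm R A L A L).symm.toLinearMap ∘ₗ
    lTensor (A ⊗[R] A) (TensorProduct.comm R L L).toLinearMap ∘ₗ
    (tensorTensorTensorComm R A L A L).toLinearMap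

@[simp]
lemma swapFactors_tmul (θ : A ⊗[R] L →ₗ[R] A ⊗[R] L →ₗ[R] M) (a b : A) (x y : L) :
    swapFactors θ (a ⊗ₜ x) (b ⊗ₜ y) = θ (a ⊗ₜ y) (b ⊗ₜ x) := by
  simp [swapFactors, tensorTensorTensorComm_tmul]

variable {θ : A ⊗[R] L →ₗ[R] A ⊗[R] L →ₗ[R] M}

lemma swapFactors_skew (hθ : ∀ X Y, θ X Y = -θ Y X) (X Y : A ⊗[R] L) :
    swapFactors θ X Y = -swapFactors θ Y X := by
  have : swapFactors θ = -(swapFactors θ).flip :=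
    ext' fun a x => ext' fun b y => by simp [hθ (a ⊗ₜ y)]
  exact congr($this X Y)

lemma isLieCocycle_iff_component : θ.IsLieCocycle ↔ ∀ (a b c : A) (x y z : L),
    component θ (a * b) c ⁅x, y⁆ z =
      component θ a (b * c) x ⁅y, z⁆ - component θ b (a * c) y ⁅x, z⁆ := by
  refine ⟨fun h a b c x y z => h (a ⊗ₜ x) (b ⊗ₜ y) (c ⊗ₜ z), fun h X Y Z => ?_⟩
  induction X using TensorProduct.induction_on with
  | zero => simp
  | add X X' hX hX' => simp only [add_lie, map_add, LinearMap.add_apply, hX, hX']; abel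
  | tmul a x =>
    induction Y using TensorProduct.induction_on with
    | zero => simp
    | add Y Y' hY hY' => simp only [add_lie, lie_add, map_add, LinearMap.add_apply, hY, hY']; abel
    | tmul b y =>
      induction Z using TensorProduct.induction_on with
      | zero => simp
      | add Z Z' hZ hZ' => simp only [lie_add, map_add, hZ, hZ']; abel
      | tmul c z => exact h a b c x y z

lemma component_add_swapFactors (θ : A ⊗[R] L →ₗ[R] A ⊗[R] L →ₗ[R] M) (a b : A) (x y : L) :
    component (θ + swapFactors θ) a b x y = component θ a b x y + component θ a b y x := by
  simp

lemma isLieCocycle_component_one (hθ : θ.IsLieCocycle) (c : A) :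
    (component θ 1 c).IsLieCocycle := fun x y z => by
  simpa only [one_mul] using isLieCocycle_iff_component.1 hθ 1 1 c x y z

lemma component_mul (hθ : θ.IsLieCocycle)
    (hperf : Submodule.span R {w : L | ∃ x y : L, ⁅x, y⁆ = w} = ⊤) (a b c : A) :
    component θ (a * b) c + component θ 1 (a * (b * c)) =
      component θ a (b * c) + component θ b (a * c) := by
  have h := isLieCocycle_iff_component.1 hθ
  refine ext_of_span_lie_eq_top hperf fun x y => ext fun z => ?_
  have e1 := h a b c x y z
  have e2 := h a 1 (b * c) x y z
  have e3 := h 1 b (a * c) x y z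
  have e4 := h 1 1 (a * (b * c)) x y z
  simp only [one_mul, mul_one, mul_left_comm b a c] at e1 e2 e3 e4 ⊢
  simp only [LinearMap.add_apply]
  linear_combination (norm := module) e1 - e2 - e3 + e4

lemma component_add_swapFactors_lie (hθ : θ.IsLieCocycle) (a b : A) (x y z : L) :
    component (θ + swapFactors θ) a b ⁅x, y⁆ z = component (θ + swapFactors θ) a b x ⁅y, z⁆ := by
  have h := isLieCocycle_iff_component.1 hθ
  have e1 := h a 1 b x y z
  have e2 := h a 1 b z y x
  rw [← lie_skew z y, ← lie_skew y x, ← lie_skew z x] at e2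
  simp only [one_mul, mul_one, map_neg, LinearMap.neg_apply] at e1 e2
  rw [component_add_swapFactors, component_add_swapFactors]
  linear_combination (norm := module) e1 + e2

lemma isLieCocycle_of_component_mul
    (hinv : ∀ (a b : A) (x y z : L), component θ a b ⁅x, y⁆ z = component θ a b x ⁅y, z⁆)
    (hmul : ∀ a b c : A, component θ (a * b) c = component θ a (b * c) + component θ b (a * c)) :
    θ.IsLieCocycle := by
  refine isLieCocycle_iff_component.2 fun a b c x y z => ?_
  rw [hmul, LinearMap.add_apply, LinearMap.add_apply, hinv, ← lie_skew x y, map_neg,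
    LinearMap.neg_apply, hinv, sub_eq_add_neg]

lemma isLieCocycle_add_swapFactors (hθ : θ.IsLieCocycle)
    (hperf : Submodule.span R {w : L | ∃ x y : L, ⁅x, y⁆ = w} = ⊤)
    (hone : ∀ (c : A) (x y : L), component θ 1 c y x = -component θ 1 c x y) :
    (θ + swapFactors θ).IsLieCocycle := by
  refine isLieCocycle_of_component_mul (component_add_swapFactors_lie hθ) fun a b c =>
    ext₂ fun x y => ?_
  have hxy := congr($(component_mul hθ hperf a b c) x y)
  have hyx := congr($(component_mul hθ hperf a b c) y x)
  simp only [LinearMap.add_apply] at hxy hyx ⊢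
  simp only [component_add_swapFactors]
  linear_combination (norm := module) hxy + hyx - hone (a * (b * c)) x y

lemma isLieCocycle_component_of_comm [Invertible (2 : R)] (hθ : θ.IsLieCocycle)
    (hperf : Submodule.span R {w : L | ∃ x y : L, ⁅x, y⁆ = w} = ⊤)
    (hcomm : ∀ a b : A, component θ a b = component θ b a) (a b : A) :
    (component θ a b).IsLieCocycle := by
  have h := isLieCocycle_iff_component.1 hθ
  have hΔ : ∀ x y z : L, (component θ a b - component θ (a * b) 1) x ⁅y, z⁆ =
      (component θ a b - component θ (a * b) 1) y ⁅x, z⁆ := fun x y z => by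
    have e1 := h a b 1 x y z
    have e2 := h (a * b) 1 1 x y z
    simp only [mul_one] at e1 e2
    rw [hcomm b a] at e1
    rw [hcomm 1 (a * b)] at e2
    simp only [LinearMap.sub_apply]
    linear_combination (norm := module) e2 - e1
  have heq : component θ a b = component θ (a * b) 1 :=
    flip_inj <| ext_of_span_lie_eq_top hperf fun y z => ext fun x =>
      sub_eq_zero.1 (by simpa using apply_lie_eq_zero_of_apply_lie_comm hΔ x y z)
  rw [heq, hcomm]
  exact isLieCocycle_component_one hθ (a * b)

section

variable [Invertible (2 : R)]

def symmPart (θ : A ⊗[R] L →ₗ[R] A ⊗[R] L →ₗ[R] M) : A ⊗[R] L →ₗ[R] A ⊗[R] L →ₗ[R] M :=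
  ⅟(2 : R) • (θ + swapFactors θ)

def antisymmPart (θ : A ⊗[R] L →ₗ[R] A ⊗[R] L →ₗ[R] M) : A ⊗[R] L →ₗ[R] A ⊗[R] L →ₗ[R] M :=
  ⅟(2 : R) • (θ - swapFactors θ)

lemma symmPart_add_antisymmPart (θ : A ⊗[R] L →ₗ[R] A ⊗[R] L →ₗ[R] M) :
    symmPart θ + antisymmPart θ = θ := by
  rw [symmPart, antisymmPart, ← smul_add, add_add_sub_cancel, ← two_smul R, smul_smul,
    invOf_mul_self, one_smul]

lemma antisymmPart_tmul_swap (θ : A ⊗[R] L →ₗ[R] A ⊗[R] L →ₗ[R] M) (a b : A) (x y : L) :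
    antisymmPart θ (a ⊗ₜ x) (b ⊗ₜ y) = -antisymmPart θ (a ⊗ₜ y) (b ⊗ₜ x) := by
  simp only [antisymmPart, LinearMap.smul_apply, LinearMap.sub_apply, swapFactors_tmul,
    ← smul_neg, neg_sub]

lemma component_antisymmPart_comm (hθ : ∀ X Y, θ X Y = -θ Y X) (a b : A) :
    component (antisymmPart θ) a b = component (antisymmPart θ) b a := ext₂ fun x y => by
  simp only [component_apply, antisymmPart, LinearMap.smul_apply, LinearMap.sub_apply,
    swapFactors_tmul, hθ (a ⊗ₜ x), hθ (a ⊗ₜ y), neg_sub_neg]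

lemma symmPart_tmul_lie (hθ : θ.IsLieCocycle) (a b : A) (x y z : L) :
    symmPart θ (a ⊗ₜ ⁅x, y⁆) (b ⊗ₜ z) = symmPart θ (a ⊗ₜ x) (b ⊗ₜ ⁅y, z⁆) :=
  congrArg (⅟(2 : R) • ·) (component_add_swapFactors_lie hθ a b x y z)

lemma symmPart_mem_lieTwoCocycles (hθ : θ ∈ lieTwoCocycles R (A ⊗[R] L) M)
    (hperf : Submodule.span R {w : L | ∃ x y : L, ⁅x, y⁆ = w} = ⊤)
    (hone : ∀ (c : A) (x y : L), component θ 1 c y x = -component θ 1 c x y) :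
    symmPart θ ∈ lieTwoCocycles R (A ⊗[R] L) M :=
  Submodule.smul_mem _ _ <| mem_lieTwoCocycles.2 ⟨fun X Y => by
    simp only [LinearMap.add_apply, hθ.1 X Y, swapFactors_skew hθ.1 X Y, neg_add],
    isLieCocycle_add_swapFactors hθ.2 hperf hone⟩

lemma antisymmPart_mem_lieTwoCocycles (hθ : θ ∈ lieTwoCocycles R (A ⊗[R] L) M)
    (hS : symmPart θ ∈ lieTwoCocycles R (A ⊗[R] L) M) :
    antisymmPart θ ∈ lieTwoCocycles R (A ⊗[R] L) M := by
  rw [eq_sub_of_add_eq' (symmPart_add_antisymmPart θ)]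
  exact sub_mem hθ hS

end

end CurrentAlgebra

open CurrentAlgebra

/-- Let `k` be a finite-dimensional perfect Lie algebra over a field
`𝔽` of characteristic zero with a nondegenerate invariant symmetric bilinear form `κ`
which is derivation invariant (every derivation of `k` is κ-skew), and let `A` be a
unital commutative associative `𝔽`-algebra.  Then every 2-cocycle `ω` of the current
algebra `A ⊗ k` with values in an `𝔽`-vector space `M` can be written as `ω = ω₁ + ω₂`,
where `ω₁` is a `k`-invariant 2-cocycle and `ω₂` is a `k`-cocyclic 2-cocycle of
`A ⊗ k`. -/
theorem two_cocycle_splits_invariant_add_cocyclic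
    {𝔽 : Type*} [Field 𝔽] [CharZero 𝔽]
    {k : Type*} [LieRing k] [LieAlgebra 𝔽 k] [FiniteDimensional 𝔽 k]
    {A : Type*} [CommRing A] [Algebra 𝔽 A]
    {M : Type*} [AddCommGroup M] [Module 𝔽 M]
    (hperf : ∀ z : k, z ∈ Submodule.span 𝔽 {w : k | ∃ x y : k, ⁅x, y⁆ = w})
    (κ : k →ₗ[𝔽] k →ₗ[𝔽] 𝔽)
    (hκsymm : ∀ x y : k, κ x y = κ y x)
    (hκinv : ∀ x y z : k, κ ⁅x, y⁆ z = κ x ⁅y, z⁆)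
    (hκnd : ∀ x : k, (∀ y : k, κ x y = 0) → x = 0)
    (hderinv : ∀ D : k →ₗ[𝔽] k, (∀ x y : k, D ⁅x, y⁆ = ⁅D x, y⁆ + ⁅x, D y⁆) →
      ∀ x y : k, κ (D x) y = - κ x (D y))
    (ω : (A ⊗[𝔽] k) →ₗ[𝔽] (A ⊗[𝔽] k) →ₗ[𝔽] M)
    (hωskew : ∀ X Y : A ⊗[𝔽] k, ω X Y = - ω Y X)
    (hωcoc : ∀ X Y Z : A ⊗[𝔽] k, ω ⁅X, Y⁆ Z = ω X ⁅Y, Z⁆ - ω Y ⁅X, Z⁆) :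
    ∃ ω₁ ω₂ : (A ⊗[𝔽] k) →ₗ[𝔽] (A ⊗[𝔽] k) →ₗ[𝔽] M,
      ω = ω₁ + ω₂ ∧
      (∀ X Y : A ⊗[𝔽] k, ω₁ X Y = - ω₁ Y X) ∧
      (∀ X Y Z : A ⊗[𝔽] k, ω₁ ⁅X, Y⁆ Z = ω₁ X ⁅Y, Z⁆ - ω₁ Y ⁅X, Z⁆) ∧
      (∀ (a b : A) (x y z : k),
        ω₁ (a ⊗ₜ ⁅x, y⁆) (b ⊗ₜ z) = ω₁ (a ⊗ₜ x) (b ⊗ₜ ⁅y, z⁆)) ∧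
      (∀ X Y : A ⊗[𝔽] k, ω₂ X Y = - ω₂ Y X) ∧
      (∀ X Y Z : A ⊗[𝔽] k, ω₂ ⁅X, Y⁆ Z = ω₂ X ⁅Y, Z⁆ - ω₂ Y ⁅X, Z⁆) ∧
      (∀ (a b : A),
        (∀ x y : k, ω₂ (a ⊗ₜ x) (b ⊗ₜ y) = - ω₂ (a ⊗ₜ y) (b ⊗ₜ x)) ∧
        (∀ x y z : k, ω₂ (a ⊗ₜ ⁅x, y⁆) (b ⊗ₜ z)
          = ω₂ (a ⊗ₜ x) (b ⊗ₜ ⁅y, z⁆) - ω₂ (a ⊗ₜ y) (b ⊗ₜ ⁅x, z⁆))) := by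
  have hperf' := Submodule.eq_top_iff'.2 hperf
  have hω : ω ∈ LinearMap.lieTwoCocycles 𝔽 (A ⊗[𝔽] k) M := ⟨hωskew, hωcoc⟩
  have hS := symmPart_mem_lieTwoCocycles hω hperf' fun c =>
    (isLieCocycle_component_one hωcoc c).apply_swap hκsymm hκinv hκnd hderinv
  have hD := antisymmPart_mem_lieTwoCocycles hω hS
  exact ⟨symmPart ω, antisymmPart ω, (symmPart_add_antisymmPart ω).symm, hS.1, hS.2,
    symmPart_tmul_lie hωcoc, hD.1, hD.2, fun a b => ⟨antisymmPart_tmul_swap ω a b,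
      isLieCocycle_component_of_comm hD.2 hperf' (component_antisymmPart_comm hωskew) a b⟩⟩
end

section
/- Assume k is finite-dimensional and perfect, and let D₁,…,D_n ∈ der₋(k) be such that κ_{D₁},…,κ_{D_n} form a basis of Z²(k). If ω is a k-cocyclic 2-cocycle of the current algebra A ⊗ k with values in an 𝔽-vector space M, then there exist linear maps f₁,…,f_n : A → M such that ω(a⊗x, b⊗y) = Σᵢ fᵢ(ab)·κ(Dᵢ x, y) for all a, b ∈ A and x, y ∈ k. -/
/-!
Skew-symmetry of `ω` and of `ω_{a,b}` gives `ω_{b,a} = ω_{a,b}`. With this, the cocycle identity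
of `ω` at `(a ⊗ x, b ⊗ y, 1 ⊗ z)` together with that of `ω_{a,b}` shows that `ω_{ab,1}` and
`ω_{a,b}` agree on `[k, k] × k`, hence everywhere because `k` is perfect.

It remains to expand the linear family `c ↦ ω_{c,1}` of `M`-valued cocycles in the basis `κ_{Dᵢ}`
with coefficients linear in `c`. Pick `vⱼ ∈ k ⊗ k` dual to the `κ_{Dᵢ}` and set
`fⱼ(c) = ω_{c,1}(vⱼ)`. After applying any linear functional `μ` on `M`, the cocycle `μ ∘ ω_{c,1}`
is scalar, so it is a combination of the `κ_{Dᵢ}` whose coefficients are read off at the `vⱼ`;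
functionals separate the points of `M`.
-/

open scoped TensorProduct

theorem LinearIndependent.surjective_pi_dual {𝔽 V ι : Type*} [Field 𝔽] [AddCommGroup V]
    [Module 𝔽 V] [Finite ι] {φ : ι → Module.Dual 𝔽 V} (h : LinearIndependent 𝔽 φ) :
    Function.Surjective (LinearMap.pi φ) := by
  have hfun : LinearIndependent 𝔽 fun i => ⇑(φ i) :=
    h.map' (LinearMap.ltoFun 𝔽 V 𝔽 𝔽) (LinearMap.ker_eq_bot.mpr DFunLike.coe_injective)
  rw [← LinearMap.range_eq_top, ← span_flip_eq_top_iff_linearIndependent.mpr hfun,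
    ← Submodule.span_eq (LinearMap.range _), LinearMap.coe_range]
  rfl

theorem LinearIndependent.tensorProduct_lift {R M N ι : Type*} [CommRing R] [AddCommGroup M]
    [Module R M] [AddCommGroup N] [Module R N] [Fintype ι] {B : ι → M →ₗ[R] N →ₗ[R] R}
    (hB : LinearIndependent R B) : LinearIndependent R fun i => TensorProduct.lift (B i) := by
  refine Fintype.linearIndependent_iff.mpr fun g hg =>
    (Fintype.linearIndependent_iff (v := B)).mp hB g ?_
  ext x y
  simpa using congr($hg (x ⊗ₜ y))

section Cocycle

variable {R L M : Type*} [CommRing R] [LieRing L] [LieAlgebra R L] [AddCommGroup M] [Module R M]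

def IsLieTwoCocycle (β : L →ₗ[R] L →ₗ[R] M) : Prop :=
  (∀ x y, β x y = -β y x) ∧ ∀ x y z, β ⁅x, y⁆ z = β x ⁅y, z⁆ - β y ⁅x, z⁆

theorem IsLieTwoCocycle.compr₂ {N : Type*} [AddCommGroup N] [Module R N]
    {β : L →ₗ[R] L →ₗ[R] M} (hβ : IsLieTwoCocycle β) (f : M →ₗ[R] N) :
    IsLieTwoCocycle (β.compr₂ f) :=
  ⟨fun x y => by simp [hβ.1 x y], fun x y z => by simp [hβ.2 x y z]⟩

end Cocycle

theorem exists_linearMap_eq_sum_smul_of_isLieTwoCocycle {𝔽 L N M ι : Type*} [Field 𝔽]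
    [LieRing L] [LieAlgebra 𝔽 L] [AddCommGroup N] [Module 𝔽 N] [AddCommGroup M] [Module 𝔽 M]
    [Fintype ι] {B : ι → L →ₗ[𝔽] L →ₗ[𝔽] 𝔽} (hindep : LinearIndependent 𝔽 B)
    (hspan : ∀ β : L →ₗ[𝔽] L →ₗ[𝔽] 𝔽, IsLieTwoCocycle β → β ∈ Submodule.span 𝔽 (Set.range B))
    (Φ : N →ₗ[𝔽] L →ₗ[𝔽] L →ₗ[𝔽] M) (hΦ : ∀ c, IsLieTwoCocycle (Φ c)) :
    ∃ f : ι → N →ₗ[𝔽] M, ∀ c x y, Φ c x y = ∑ i, B i x y • f i c := by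
  classical
  choose v hv using fun j => hindep.tensorProduct_lift.surjective_pi_dual (Pi.single j 1)
  refine ⟨fun j => LinearMap.applyₗ (v j) ∘ₗ TensorProduct.uncurry (.id 𝔽) L L M ∘ₗ Φ,
    fun c x y => Module.eval_apply_injective 𝔽 (LinearMap.ext fun μ => ?_)⟩
  obtain ⟨a, ha⟩ := (Submodule.mem_span_range_iff_exists_fun 𝔽).mp
    (hspan _ ((hΦ c).compr₂ μ))
  have hcoeff j : μ (TensorProduct.uncurry (.id 𝔽) L L M (Φ c) (v j)) = a j := by
    have hvj i : TensorProduct.uncurry (.id 𝔽) L L 𝔽 (B i) (v j) = (Pi.single j 1 : ι → 𝔽) i :=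
      congr_fun (hv j) i
    change (μ ∘ₗ TensorProduct.lift (Φ c)) (v j) = a j
    rw [← TensorProduct.lift_compr₂, ← ha]
    change TensorProduct.uncurry (.id 𝔽) L L 𝔽 (∑ i, a i • B i) (v j) = a j
    simp [hvj, Pi.single_apply]
  have hμ : μ (Φ c x y) = ∑ i, a i * B i x y := by simpa using congr($ha x y).symm
  simp [hμ, hcoeff, mul_comm]

section CurrentAlgebra

variable {R A L M : Type*} [CommRing R] [CommRing A] [Algebra R A] [LieRing L] [LieAlgebra R L]
  [AddCommGroup M] [Module R M]

/-- The form `ω_{a,b}` of the paper. -/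
def currentSlice (ω : (A ⊗[R] L) →ₗ[R] (A ⊗[R] L) →ₗ[R] M) (a b : A) : L →ₗ[R] L →ₗ[R] M :=
  (ω ∘ₗ TensorProduct.mk R A L a).compl₂ (TensorProduct.mk R A L b)

@[simp]
theorem currentSlice_apply (ω : (A ⊗[R] L) →ₗ[R] (A ⊗[R] L) →ₗ[R] M) (a b : A) (x y : L) :
    currentSlice ω a b x y = ω (a ⊗ₜ x) (b ⊗ₜ y) :=
  rfl

variable {ω : (A ⊗[R] L) →ₗ[R] (A ⊗[R] L) →ₗ[R] M}

theorem currentSlice_comm (hωskew : ∀ X Y, ω X Y = -ω Y X) {a b : A}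
    (hab : IsLieTwoCocycle (currentSlice ω a b)) :
    currentSlice ω b a = currentSlice ω a b := by
  ext x y
  have h := hab.1 y x
  rw [currentSlice_apply, currentSlice_apply] at h
  rw [currentSlice_apply, hωskew, h, neg_neg, currentSlice_apply]

theorem currentSlice_mul_one_apply_lie (hωskew : ∀ X Y, ω X Y = -ω Y X)
    (hωcoc : ∀ X Y Z, ω ⁅X, Y⁆ Z = ω X ⁅Y, Z⁆ - ω Y ⁅X, Z⁆) {a b : A}
    (hab : IsLieTwoCocycle (currentSlice ω a b)) (x y z : L) :
    currentSlice ω (a * b) 1 ⁅x, y⁆ z = currentSlice ω a b ⁅x, y⁆ z := by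
  have h := hωcoc (a ⊗ₜ x) (b ⊗ₜ y) (1 ⊗ₜ z)
  simp only [LieAlgebra.ExtendScalars.bracket_tmul, mul_one] at h
  rw [currentSlice_apply, h, ← currentSlice_apply ω b a, currentSlice_comm hωskew hab]
  exact (hab.2 x y z).symm

theorem currentSlice_eq_mul_one
    (hperf : ∀ z : L, z ∈ Submodule.span R {w : L | ∃ x y : L, ⁅x, y⁆ = w})
    (hωskew : ∀ X Y, ω X Y = -ω Y X)
    (hωcoc : ∀ X Y Z, ω ⁅X, Y⁆ Z = ω X ⁅Y, Z⁆ - ω Y ⁅X, Z⁆) {a b : A}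
    (hab : IsLieTwoCocycle (currentSlice ω a b)) :
    currentSlice ω a b = currentSlice ω (a * b) 1 := by
  refine LinearMap.ext_on (Submodule.eq_top_iff'.mpr hperf) ?_
  rintro _ ⟨x, y, rfl⟩
  ext z
  exact (currentSlice_mul_one_apply_lie hωskew hωcoc hab x y z).symm

end CurrentAlgebra

theorem k_cocyclic_eq_sum_eta_general
    {𝔽 : Type*} [Field 𝔽]
    {k : Type*} [LieRing k] [LieAlgebra 𝔽 k]
    {A : Type*} [CommRing A] [Algebra 𝔽 A]
    {M : Type*} [AddCommGroup M] [Module 𝔽 M]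
    (hperf : ∀ z : k, z ∈ Submodule.span 𝔽 {w : k | ∃ x y : k, ⁅x, y⁆ = w})
    (κ : k →ₗ[𝔽] k →ₗ[𝔽] 𝔽)
    (n : ℕ) (D : Fin n → (k →ₗ[𝔽] k))
    (hindep : LinearIndependent 𝔽 (fun i => κ ∘ₗ D i))
    (hspan : ∀ β : k →ₗ[𝔽] k →ₗ[𝔽] 𝔽,
      (∀ x y : k, β x y = - β y x) →
      (∀ x y z : k, β ⁅x, y⁆ z = β x ⁅y, z⁆ - β y ⁅x, z⁆) →
      β ∈ Submodule.span 𝔽 (Set.range fun i => κ ∘ₗ D i))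
    (ω : (A ⊗[𝔽] k) →ₗ[𝔽] (A ⊗[𝔽] k) →ₗ[𝔽] M)
    (hωskew : ∀ X Y : A ⊗[𝔽] k, ω X Y = - ω Y X)
    (hωcoc : ∀ X Y Z : A ⊗[𝔽] k, ω ⁅X, Y⁆ Z = ω X ⁅Y, Z⁆ - ω Y ⁅X, Z⁆)
    (hcocyclic : ∀ (a b : A),
      (∀ x y : k, ω (a ⊗ₜ x) (b ⊗ₜ y) = - ω (a ⊗ₜ y) (b ⊗ₜ x)) ∧
      (∀ x y z : k, ω (a ⊗ₜ ⁅x, y⁆) (b ⊗ₜ z)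
        = ω (a ⊗ₜ x) (b ⊗ₜ ⁅y, z⁆) - ω (a ⊗ₜ y) (b ⊗ₜ ⁅x, z⁆))) :
    ∃ f : Fin n → (A →ₗ[𝔽] M),
      ∀ (a b : A) (x y : k),
        ω (a ⊗ₜ x) (b ⊗ₜ y) = ∑ i, κ (D i x) y • f i (a * b) := by
  let slicesOne : A →ₗ[𝔽] k →ₗ[𝔽] k →ₗ[𝔽] M :=
    ((TensorProduct.mk 𝔽 A k).compr₂ ω).compr₂ (LinearMap.lcomp 𝔽 M (TensorProduct.mk 𝔽 A k 1))
  obtain ⟨f, hf⟩ := exists_linearMap_eq_sum_smul_of_isLieTwoCocycle hindep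
    (fun β hβ => hspan β hβ.1 hβ.2) slicesOne fun c => hcocyclic c 1
  refine ⟨f, fun a b x y => ?_⟩
  rw [← currentSlice_apply, currentSlice_eq_mul_one hperf hωskew hωcoc (hcocyclic a b)]
  exact hf (a * b) x y

/-- Let `k` be a finite-dimensional perfect Lie algebra over a field
`𝔽` of characteristic zero with a nondegenerate invariant symmetric bilinear form `κ`,
and let `D₁, …, D_n ∈ der₋(k)` be such that the forms `κ_{Dᵢ} = κ(Dᵢ·,·)` form a basis
of `Z²(k)`.  If `ω` is a `k`-cocyclic 2-cocycle of the current algebra `A ⊗ k` with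
values in an `𝔽`-vector space `M`, then there exist linear maps `f₁, …, f_n : A → M`
such that `ω(a⊗x, b⊗y) = Σᵢ fᵢ(ab)·κ(Dᵢ x, y)` for all `a, b ∈ A`, `x, y ∈ k`. -/
theorem k_cocyclic_eq_sum_eta
    {𝔽 : Type*} [Field 𝔽] [CharZero 𝔽]
    {k : Type*} [LieRing k] [LieAlgebra 𝔽 k] [FiniteDimensional 𝔽 k]
    {A : Type*} [CommRing A] [Algebra 𝔽 A]
    {M : Type*} [AddCommGroup M] [Module 𝔽 M]
    (hperf : ∀ z : k, z ∈ Submodule.span 𝔽 {w : k | ∃ x y : k, ⁅x, y⁆ = w})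
    (κ : k →ₗ[𝔽] k →ₗ[𝔽] 𝔽)
    (hκsymm : ∀ x y : k, κ x y = κ y x)
    (hκinv : ∀ x y z : k, κ ⁅x, y⁆ z = κ x ⁅y, z⁆)
    (hκnd : ∀ x : k, (∀ y : k, κ x y = 0) → x = 0)
    (n : ℕ) (D : Fin n → (k →ₗ[𝔽] k))
    (hDder : ∀ i, ∀ x y : k, D i ⁅x, y⁆ = ⁅D i x, y⁆ + ⁅x, D i y⁆)
    (hDskew : ∀ i, ∀ x y : k, κ (D i x) y = - κ x (D i y))
    (hindep : LinearIndependent 𝔽 (fun i => κ ∘ₗ D i))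
    (hspan : ∀ β : k →ₗ[𝔽] k →ₗ[𝔽] 𝔽,
      (∀ x y : k, β x y = - β y x) →
      (∀ x y z : k, β ⁅x, y⁆ z = β x ⁅y, z⁆ - β y ⁅x, z⁆) →
      β ∈ Submodule.span 𝔽 (Set.range fun i => κ ∘ₗ D i))
    (ω : (A ⊗[𝔽] k) →ₗ[𝔽] (A ⊗[𝔽] k) →ₗ[𝔽] M)
    (hωskew : ∀ X Y : A ⊗[𝔽] k, ω X Y = - ω Y X)
    (hωcoc : ∀ X Y Z : A ⊗[𝔽] k, ω ⁅X, Y⁆ Z = ω X ⁅Y, Z⁆ - ω Y ⁅X, Z⁆)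
    (hcocyclic : ∀ (a b : A),
      (∀ x y : k, ω (a ⊗ₜ x) (b ⊗ₜ y) = - ω (a ⊗ₜ y) (b ⊗ₜ x)) ∧
      (∀ x y z : k, ω (a ⊗ₜ ⁅x, y⁆) (b ⊗ₜ z)
        = ω (a ⊗ₜ x) (b ⊗ₜ ⁅y, z⁆) - ω (a ⊗ₜ y) (b ⊗ₜ ⁅x, z⁆))) :
    ∃ f : Fin n → (A →ₗ[𝔽] M),
      ∀ (a b : A) (x y : k),
        ω (a ⊗ₜ x) (b ⊗ₜ y) = ∑ i, κ (D i x) y • f i (a * b) :=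
  k_cocyclic_eq_sum_eta_general hperf κ n D hindep hspan ω hωskew hωcoc hcocyclic
end

section
/- Let k be a finite-dimensional simple real Lie algebra whose Killing form κ is negative definite, A a unital commutative associative real algebra, and M a real vector space. Then every 2-cocycle ω of the current algebra A ⊗ k with values in M is cohomologous to one of the form ω_F(a⊗x, b⊗y) = F(a,b)·κ(x,y) for some Hochschild map F : A × A → M; that is, there exist a Hochschild map F and a linear map ℓ : A ⊗ k → M with ω(a⊗x, b⊗y) = F(a,b)κ(x,y) + ℓ((ab)⊗[x,y]) for all a, b ∈ A and x, y ∈ k. -/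
/-!
Every endomorphism `T` of the adjoint module of a Lie algebra is symmetric for the Killing form,
since `ad (T x) = T ∘ ad x`. When `κ` is negative definite, `-κ` is an inner product, so `T` has a
real eigenvalue; its eigenspace is an ideal, hence all of `k`, and `T` is a scalar. Consequently
every invariant bilinear form on `k`, with values in any vector space, is a multiple of `κ`, and the
Casimir operator `∑ ad (bᵢ)²` of a `-κ`-orthonormal basis is `-1` (compare traces).

The Casimir operator proves Whitehead's first lemma for the module `Hom(k, N)`. Applied to
`(z, w) ↦ ω(1 ⊗ z, c ⊗ w)`, a cocycle by the cocycle identity of `ω`, it gives `ℓ` with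
`ℓ(c ⊗ [z, w]) = ω(1 ⊗ z, c ⊗ w)`. The cocycle identity then says exactly that
`(x, y) ↦ ω(a ⊗ x, b ⊗ y) - ℓ(ab ⊗ [x, y])` is invariant, so it equals `κ(x, y) • F(a, b)`. Feeding
this back into the cocycle identity, the `ℓ`-terms cancel by the Jacobi identity and what remains
is `κ([x, y], z)` times the Hochschild identity for `F`.
-/

open scoped TensorProduct

namespace LieAlgebra

section CommRing

variable {R L : Type*} [CommRing R] [LieRing L] [LieAlgebra R L]

lemma _root_.LieModuleHom.ad_apply_eq_comp (T : L →ₗ⁅R,L⁆ L) (x : L) :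
    ad R L (T x) = T.toLinearMap ∘ₗ ad R L x := by
  ext y
  simp only [ad_apply, LinearMap.comp_apply, LieModuleHom.coe_toLinearMap]
  rw [← lie_skew, ← T.map_lie, ← map_neg, lie_skew]

lemma _root_.LieModuleHom.killingForm_map_left_eq_map_right (T : L →ₗ⁅R,L⁆ L) (x y : L) :
    killingForm R L (T x) y = killingForm R L x (T y) := by
  have hcomm : ad R L x ∘ₗ T.toLinearMap = T.toLinearMap ∘ₗ ad R L x := by
    ext z; simp
  rw [killingForm_apply_apply, killingForm_apply_apply, T.ad_apply_eq_comp, T.ad_apply_eq_comp,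
    ← LinearMap.comp_assoc, hcomm, LinearMap.comp_assoc]

variable {ι : Type*} [Fintype ι] {b : Module.Basis ι R L}

variable (b) in
/-- For `b` orthonormal for `-κ` (as below) this is minus the usual Casimir operator of `κ`. -/
noncomputable def casimir : Module.End R L := ∑ i, ad R L (b i) * ad R L (b i)

lemma casimir_apply (x : L) : casimir b x = ∑ i, ⁅b i, ⁅b i, x⁆⁆ := by
  simp [casimir, LinearMap.sum_apply]

variable [DecidableEq ι] (hb : ∀ i j, killingForm R L (b i) (b j) = if i = j then -1 else 0)
include hb

lemma killingForm_apply_basis (v : L) (j : ι) :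
    killingForm R L v (b j) = -b.repr v j := by
  conv_lhs => rw [← b.sum_repr v]
  simp only [map_sum, map_smul, LinearMap.sum_apply, LinearMap.smul_apply, hb, smul_eq_mul,
    mul_ite, mul_neg, mul_one, mul_zero, Finset.sum_ite_eq', Finset.mem_univ, if_true]

lemma sum_killingForm_smul_basis (v : L) :
    ∑ i, killingForm R L v (b i) • b i = -v := by
  simp_rw [killingForm_apply_basis hb, neg_smul, Finset.sum_neg_distrib, b.sum_repr]

lemma sum_apply_lie_add_apply_lie_eq_zero {N : Type*} [AddCommGroup N] [Module R N]
    (G : L →ₗ[R] L →ₗ[R] N) (z : L) :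
    ∑ i, (G ⁅z, b i⁆ (b i) + G (b i) ⁅z, b i⁆) = 0 := by
  set c : ι → ι → R := fun i j => killingForm R L ⁅z, b i⁆ (b j)
  have hexp (i : ι) : ⁅z, b i⁆ = -∑ j, c i j • b j := by
    rw [sum_killingForm_smul_basis hb, neg_neg]
  have hc (i j : ι) : c j i = -c i j := by
    simp only [c]
    rw [LieModule.traceForm_apply_lie_apply', LieModule.traceForm_comm]
  have hleft (i : ι) : G ⁅z, b i⁆ (b i) = -∑ j, c i j • G (b j) (b i) := by
    conv_lhs => rw [hexp i]
    simp
  have hright (i : ι) : G (b i) ⁅z, b i⁆ = -∑ j, c i j • G (b i) (b j) := by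
    conv_lhs => rw [hexp i]
    simp
  rw [Finset.sum_add_distrib, Finset.sum_congr rfl fun i _ => hleft i,
    Finset.sum_congr rfl fun i _ => hright i]
  simp only [Finset.sum_neg_distrib]
  conv_lhs => enter [2, 1]; rw [Finset.sum_comm]
  have hswap : ∑ i, ∑ j, c j i • G (b j) (b i) = -∑ i, ∑ j, c i j • G (b j) (b i) := by
    simp only [← Finset.sum_neg_distrib, ← neg_smul]
    exact Finset.sum_congr rfl fun i _ => Finset.sum_congr rfl fun j _ => by rw [hc]
  rw [hswap, neg_neg, neg_add_cancel]

lemma casimir_lie (z x : L) : casimir b ⁅z, x⁆ = ⁅z, casimir b x⁆ := by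
  have h := sum_apply_lie_add_apply_lie_eq_zero hb
    ((ad R L : L →ₗ[R] Module.End R L).compl₂ ((ad R L : L →ₗ[R] Module.End R L).flip x)) z
  simp only [LinearMap.compl₂_apply, LinearMap.flip_apply, LieHom.coe_toLinearMap,
    ad_apply] at h
  rw [eq_comm, casimir_apply, casimir_apply, lie_sum, ← sub_eq_zero, ← Finset.sum_sub_distrib,
    ← h]
  refine Finset.sum_congr rfl fun i _ => ?_
  rw [leibniz_lie z (b i), leibniz_lie z (b i) x, lie_add]
  abel

lemma trace_casimir :
    LinearMap.trace R L (casimir b) = -Fintype.card ι := by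
  simp [casimir, ← killingForm_apply_apply, Module.End.mul_eq_comp, hb]

end CommRing

section Compact

variable {k : Type*} [LieRing k] [LieAlgebra ℝ k]
  (hκ : ∀ x : k, x ≠ 0 → killingForm ℝ k x x < 0)
include hκ

noncomputable abbrev negKillingInnerProductCore : InnerProductSpace.Core ℝ k where
  inner x y := -killingForm ℝ k x y
  conj_inner_symm x y := by simp [LieModule.traceForm_comm ℝ k k x y]
  re_inner_nonneg x := by
    rcases eq_or_ne x 0 with rfl | hx
    · simp
    · simpa using (hκ x hx).le
  add_left x y z := by simp [add_comm]
  smul_left x y r := by simp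
  definite x hx := by
    by_contra h
    exact (hκ x h).ne (neg_eq_zero.mp hx)

lemma killingForm_nondegenerate : (killingForm ℝ k).Nondegenerate :=
  (LieModule.traceForm_isSymm ℝ k k).isRefl.nondegenerate_iff_separatingLeft.mpr fun x hx => by
    by_contra h
    exact (hκ x h).ne (hx x)

variable [FiniteDimensional ℝ k]

lemma exists_basis_killingForm_eq_ite :
    ∃ b : Module.Basis (Fin (Module.finrank ℝ k)) ℝ k,
      ∀ i j, killingForm ℝ k (b i) (b j) = if i = j then -1 else 0 := by
  let _ := (negKillingInnerProductCore hκ).toNormedAddCommGroup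
  let _ := InnerProductSpace.ofCore (negKillingInnerProductCore hκ).toCore
  refine ⟨(stdOrthonormalBasis ℝ k).toBasis, fun i j => ?_⟩
  have h := orthonormal_iff_ite.mp (stdOrthonormalBasis ℝ k).orthonormal i j
  rw [OrthonormalBasis.coe_toBasis, ← neg_eq_iff_eq_neg.mpr h.symm]
  split_ifs <;> simp

lemma _root_.LieModuleHom.exists_eq_smul_of_killingForm_neg [IsSimple ℝ k]
    (T : k →ₗ⁅ℝ,k⁆ k) : ∃ c : ℝ, ∀ x, T x = c • x := by
  let _ := (negKillingInnerProductCore hκ).toNormedAddCommGroup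
  let _ := InnerProductSpace.ofCore (negKillingInnerProductCore hκ).toCore
  have _ := IsSimple.nontrivial ℝ k
  have hT : T.toLinearMap.IsSymmetric := fun x y =>
    congrArg Neg.neg (T.killingForm_map_left_eq_map_right x y)
  obtain ⟨c, hc⟩ : ∃ c, Module.End.HasEigenvalue T.toLinearMap c :=
    ⟨_, hT.hasEigenvalue_iSup_of_finiteDimensional⟩
  obtain ⟨x, hx⟩ := hc.exists_hasEigenvector
  refine ⟨c, fun y => sub_eq_zero.mp ?_⟩
  have hker : (T - c • LieModuleHom.id).ker = ⊤ := by
    refine (IsSimple.eq_bot_or_eq_top _).resolve_left fun h => hx.2 ?_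
    rw [← LieSubmodule.mem_bot (R := ℝ) (L := k), ← h, LieModuleHom.mem_ker]
    simpa [LieModuleHom.sub_apply, LieModuleHom.smul_apply, sub_eq_zero] using hx.apply_eq_smul
  have hy : y ∈ (T - c • LieModuleHom.id).ker := hker ▸ LieSubmodule.mem_top y
  simpa [LieModuleHom.sub_apply, LieModuleHom.smul_apply] using LieModuleHom.mem_ker.mp hy

lemma casimir_eq_neg [IsSimple ℝ k] {ι : Type*} [Fintype ι] [DecidableEq ι]
    {b : Module.Basis ι ℝ k} (hb : ∀ i j, killingForm ℝ k (b i) (b j) = if i = j then -1 else 0)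
    (x : k) : casimir b x = -x := by
  obtain ⟨c, hc⟩ := LieModuleHom.exists_eq_smul_of_killingForm_neg hκ
    { casimir b with map_lie' := casimir_lie hb _ _ }
  have _ := IsSimple.nontrivial ℝ k
  have htrace := trace_casimir hb
  rw [show casimir b = c • LinearMap.id from LinearMap.ext hc, map_smul, LinearMap.trace_id,
    ← Module.finrank_eq_card_basis b, smul_eq_mul, ← neg_one_mul] at htrace
  have hc_eq : c = -1 := mul_right_cancel₀ (by exact_mod_cast Module.finrank_pos.ne') htrace
  simpa [hc_eq] using hc x

lemma exists_eq_smul_killingForm_of_lieInvariant [IsSimple ℝ k] (B : LinearMap.BilinForm ℝ k)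
    (hB : B.lieInvariant k) : ∃ c : ℝ, B = c • killingForm ℝ k := by
  set e := (killingForm ℝ k).toDual (killingForm_nondegenerate hκ)
  have he (x y : k) : killingForm ℝ k (e.symm (B x)) y = B x y :=
    LinearMap.BilinForm.apply_toDual_symm_apply _ _
  let T : k →ₗ⁅ℝ,k⁆ k :=
    { e.symm.toLinearMap ∘ₗ B with
      map_lie' := fun {z x} => by
        show e.symm (B ⁅z, x⁆) = ⁅z, e.symm (B x)⁆
        refine sub_eq_zero.mp ((killingForm_nondegenerate hκ).1 _ fun y => ?_)
        rw [map_sub, LinearMap.sub_apply, he, hB, LieModule.traceForm_apply_lie_apply', he,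
          sub_self] }
  obtain ⟨c, hc⟩ := T.exists_eq_smul_of_killingForm_neg hκ
  refine ⟨c, LinearMap.ext₂ fun x y => ?_⟩
  rw [← he, show e.symm (B x) = T x from rfl, hc]
  simp

lemma killingForm_smul_eq_of_invariant [IsSimple ℝ k] {N : Type*} [AddCommGroup N] [Module ℝ N]
    (G : k →ₗ[ℝ] k →ₗ[ℝ] N) (hG : ∀ z x y : k, G ⁅z, x⁆ y = -G x ⁅z, y⁆) (x y x' y' : k) :
    killingForm ℝ k x' y' • G x y = killingForm ℝ k x y • G x' y' := by
  rw [← sub_eq_zero, ← Module.forall_dual_apply_eq_zero_iff ℝ]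
  intro φ
  obtain ⟨c, hc⟩ := exists_eq_smul_killingForm_of_lieInvariant hκ (G.compr₂ φ)
    fun z x y => by simp [hG]
  have hφ (x y : k) : φ (G x y) = c * killingForm ℝ k x y := by
    simpa using LinearMap.congr_fun₂ hc x y
  simp only [map_sub, map_smul, hφ, smul_eq_mul]
  ring

lemma exists_linearMap_lie_eq_of_cocycle [IsSimple ℝ k] {N : Type*} [AddCommGroup N]
    [Module ℝ N] (β : k →ₗ[ℝ] k →ₗ[ℝ] N)
    (hβ : ∀ z x y : k, β ⁅z, x⁆ y = β z ⁅x, y⁆ - β x ⁅z, y⁆) :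
    ∃ f : k →ₗ[ℝ] N, ∀ z w, β z w = f ⁅z, w⁆ := by
  obtain ⟨b, hb⟩ := exists_basis_killingForm_eq_ite hκ
  refine ⟨∑ i, β.flip (b i) ∘ₗ ad ℝ k (b i), fun z w => ?_⟩
  have hswap := sum_apply_lie_add_apply_lie_eq_zero hb
    (β ∘ₗ (ad ℝ k : k →ₗ[ℝ] Module.End ℝ k).flip w) z
  simp only [LinearMap.comp_apply, LinearMap.flip_apply, LieHom.coe_toLinearMap,
    ad_apply] at hswap
  have hcasimir : ∑ i, ⁅⁅b i, w⁆, b i⁆ = w := by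
    calc ∑ i, ⁅⁅b i, w⁆, b i⁆ = -casimir b w := by
          rw [casimir_apply, ← Finset.sum_neg_distrib]
          exact Finset.sum_congr rfl fun i _ => (lie_skew _ _).symm
      _ = w := by rw [casimir_eq_neg hκ hb, neg_neg]
  simp only [LinearMap.sum_apply, LinearMap.comp_apply, LinearMap.flip_apply, ad_apply]
  calc β z w = ∑ i, β z ⁅⁅b i, w⁆, b i⁆ := by rw [← map_sum, hcasimir]
    _ = ∑ i, (β ⁅b i, ⁅z, w⁆⁆ (b i) + (β ⁅⁅z, b i⁆, w⁆ (b i) + β ⁅b i, w⁆ ⁅z, b i⁆)) := by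
        refine Finset.sum_congr rfl fun i _ => ?_
        rw [leibniz_lie (b i) z w, map_add, LinearMap.add_apply, hβ z ⁅b i, w⁆ (b i),
          ← lie_skew (b i) z, neg_lie, map_neg, LinearMap.neg_apply]
        abel
    _ = ∑ i, β ⁅b i, ⁅z, w⁆⁆ (b i) := by rw [Finset.sum_add_distrib, hswap, add_zero]

end Compact

end LieAlgebra

section CurrentAlgebra

variable {R A L M : Type*} [CommRing R] [CommRing A] [Algebra R A] [LieRing L] [LieAlgebra R L]
  [AddCommGroup M] [Module R M] {ω : A ⊗[R] L →ₗ[R] A ⊗[R] L →ₗ[R] M}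
  (hω : ∀ X Y Z : A ⊗[R] L, ω ⁅X, Y⁆ Z = ω X ⁅Y, Z⁆ - ω Y ⁅X, Z⁆)
include hω

lemma apply_tmul_lie_add_apply_tmul_lie (a c : A) (z x y : L) :
    ω (a ⊗ₜ ⁅z, x⁆) (c ⊗ₜ y) + ω (a ⊗ₜ x) (c ⊗ₜ ⁅z, y⁆) = ω (1 ⊗ₜ z) ((a * c) ⊗ₜ ⁅x, y⁆) := by
  have h := hω (1 ⊗ₜ z) (a ⊗ₜ x) (c ⊗ₜ y)
  simp only [LieAlgebra.ExtendScalars.bracket_tmul, one_mul] at h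
  rw [h, sub_add_cancel]

lemma killingForm_lie_smul_apply_mul (F : A →ₗ[R] A →ₗ[R] M) (ℓ : A ⊗[R] L →ₗ[R] M)
    (hF : ∀ (a b : A) (x y : L),
      ω (a ⊗ₜ x) (b ⊗ₜ y) = killingForm R L x y • F a b + ℓ ((a * b) ⊗ₜ ⁅x, y⁆))
    (p q r : A) (x y z : L) :
    killingForm R L ⁅x, y⁆ z • F (p * q) r =
      killingForm R L ⁅x, y⁆ z • (F p (q * r) + F q (p * r)) := by
  have hyx : killingForm R L y ⁅x, z⁆ = -killingForm R L x ⁅y, z⁆ := by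
    rw [← LieModule.traceForm_apply_lie_apply, LieModule.traceForm_apply_lie_apply']
  have h := hω (p ⊗ₜ x) (q ⊗ₜ y) (r ⊗ₜ z)
  simp only [LieAlgebra.ExtendScalars.bracket_tmul, hF, ← mul_assoc, mul_left_comm q p,
    lie_lie, TensorProduct.tmul_sub, map_sub, LieModule.traceForm_apply_lie_apply, hyx] at h
  rw [LieModule.traceForm_apply_lie_apply]
  linear_combination (norm := module) h

end CurrentAlgebra

section CompactCurrentAlgebra

open LieAlgebra

variable {k A M : Type*} [LieRing k] [LieAlgebra ℝ k] [FiniteDimensional ℝ k] [IsSimple ℝ k]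
  (hκ : ∀ x : k, x ≠ 0 → killingForm ℝ k x x < 0)
  [CommRing A] [Algebra ℝ A] [AddCommGroup M] [Module ℝ M] {ω : A ⊗[ℝ] k →ₗ[ℝ] A ⊗[ℝ] k →ₗ[ℝ] M}
  (hω : ∀ X Y Z : A ⊗[ℝ] k, ω ⁅X, Y⁆ Z = ω X ⁅Y, Z⁆ - ω Y ⁅X, Z⁆)
include hκ hω

lemma exists_linearMap_tmul_lie_eq_apply_one_tmul :
    ∃ ℓ : A ⊗[ℝ] k →ₗ[ℝ] M, ∀ (c : A) (z w : k), ℓ (c ⊗ₜ ⁅z, w⁆) = ω (1 ⊗ₜ z) (c ⊗ₜ w) := by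
  let β : k →ₗ[ℝ] k →ₗ[ℝ] A →ₗ[ℝ] M :=
    (LinearMap.llcomp ℝ A (A ⊗[ℝ] k) M ∘ₗ ω ∘ₗ TensorProduct.mk ℝ A k 1).compl₂
      (TensorProduct.mk ℝ A k).flip
  obtain ⟨f, hf⟩ := exists_linearMap_lie_eq_of_cocycle hκ β fun z x y => LinearMap.ext fun c => by
    simpa [β, eq_sub_iff_add_eq] using apply_tmul_lie_add_apply_tmul_lie hω 1 c z x y
  exact ⟨TensorProduct.lift f.flip, fun c z w => by simp [← hf, β]⟩

lemma killingForm_smul_apply_tmul_sub_eq {ℓ : A ⊗[ℝ] k →ₗ[ℝ] M}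
    (hℓ : ∀ (c : A) (z w : k), ℓ (c ⊗ₜ ⁅z, w⁆) = ω (1 ⊗ₜ z) (c ⊗ₜ w)) (a c : A) (x y e : k) :
    killingForm ℝ k e e • (ω (a ⊗ₜ x) (c ⊗ₜ y) - ℓ ((a * c) ⊗ₜ ⁅x, y⁆)) =
      killingForm ℝ k x y • ω (a ⊗ₜ e) (c ⊗ₜ e) := by
  let G : k →ₗ[ℝ] k →ₗ[ℝ] M :=
    ω.compl₁₂ (TensorProduct.mk ℝ A k a) (TensorProduct.mk ℝ A k c) -
      (ad ℝ k : k →ₗ[ℝ] Module.End ℝ k).compr₂ (ℓ ∘ₗ TensorProduct.mk ℝ A k (a * c))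
  have hG (z x y : k) : G ⁅z, x⁆ y = -G x ⁅z, y⁆ := by
    have h := apply_tmul_lie_add_apply_tmul_lie hω a c z x y
    rw [← hℓ, leibniz_lie, TensorProduct.tmul_add, map_add] at h
    simp only [G, LinearMap.sub_apply, LinearMap.compl₁₂_apply, LinearMap.compr₂_apply,
      TensorProduct.mk_apply, LinearMap.comp_apply, LieHom.coe_toLinearMap, ad_apply]
    linear_combination (norm := module) h
  simpa [G] using killingForm_smul_eq_of_invariant hκ G hG x y e e

end CompactCurrentAlgebra

/-- Let `k` be a finite-dimensional simple real Lie algebra whose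
Killing form `κ` is negative definite (i.e. a compact simple Lie algebra), `A` a unital
commutative associative real algebra, and `M` a real vector space.  Then every 2-cocycle
`ω` of the current algebra `A ⊗ k` with values in `M` is cohomologous to one of the form
`ω_F(a⊗x, b⊗y) = F(a,b)·κ(x,y)` for some Hochschild map `F : A × A → M`: there exist a
Hochschild map `F` and a linear map `ℓ : A ⊗ k → M` with
`ω(a⊗x, b⊗y) = F(a,b)κ(x,y) + ℓ((ab)⊗[x,y])` for all `a, b ∈ A`, `x, y ∈ k`. -/
theorem two_cocycle_compact_simple_current_algebra
    {k : Type*} [LieRing k] [LieAlgebra ℝ k] [FiniteDimensional ℝ k]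
    [LieAlgebra.IsSimple ℝ k]
    (hκneg : ∀ x : k, x ≠ 0 → killingForm ℝ k x x < 0)
    {A : Type*} [CommRing A] [Algebra ℝ A]
    {M : Type*} [AddCommGroup M] [Module ℝ M]
    (ω : (A ⊗[ℝ] k) →ₗ[ℝ] (A ⊗[ℝ] k) →ₗ[ℝ] M)
    (hωskew : ∀ X Y : A ⊗[ℝ] k, ω X Y = - ω Y X)
    (hωcoc : ∀ X Y Z : A ⊗[ℝ] k, ω ⁅X, Y⁆ Z = ω X ⁅Y, Z⁆ - ω Y ⁅X, Z⁆) :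
    ∃ (F : A →ₗ[ℝ] A →ₗ[ℝ] M) (ℓ : (A ⊗[ℝ] k) →ₗ[ℝ] M),
      (∀ a b : A, F a b = - F b a) ∧
      (∀ a b c : A, F (a * b) c = F a (b * c) + F b (a * c)) ∧
      (∀ (a b : A) (x y : k),
        ω (a ⊗ₜ x) (b ⊗ₜ y)
          = killingForm ℝ k x y • F a b + ℓ ((a * b) ⊗ₜ ⁅x, y⁆)) := by
  obtain ⟨ℓ, hℓ⟩ := exists_linearMap_tmul_lie_eq_apply_one_tmul hκneg hωcoc
  have _ := LieAlgebra.IsSimple.nontrivial ℝ k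
  obtain ⟨e, he⟩ := exists_ne (0 : k)
  have hee : killingForm ℝ k e e ≠ 0 := (hκneg e he).ne
  let F : A →ₗ[ℝ] A →ₗ[ℝ] M := (killingForm ℝ k e e)⁻¹ •
    ω.compl₁₂ ((TensorProduct.mk ℝ A k).flip e) ((TensorProduct.mk ℝ A k).flip e)
  have hF (a b : A) (x y : k) :
      ω (a ⊗ₜ x) (b ⊗ₜ y) = killingForm ℝ k x y • F a b + ℓ ((a * b) ⊗ₜ ⁅x, y⁆) := by
    rw [← sub_eq_iff_eq_add]
    apply smul_right_injective M hee
    dsimp only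
    rw [killingForm_smul_apply_tmul_sub_eq hκneg hωcoc hℓ]
    simp [F, smul_smul, mul_left_comm _ (killingForm ℝ k x y), mul_inv_cancel₀ hee]
  obtain ⟨x, y, hxy⟩ : ∃ x y : k, ⁅x, y⁆ ≠ 0 := by
    by_contra! h
    exact LieAlgebra.IsSimple.non_abelian ℝ (L := k) ⟨h⟩
  refine ⟨F, ℓ, fun a b => by simp [F, hωskew (a ⊗ₜ e)], fun a b c => ?_, hF⟩
  exact smul_right_injective M (hκneg _ hxy).ne
    (killingForm_lie_smul_apply_mul hωcoc F ℓ hF a b c x y ⁅x, y⁆)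
end

section
/- Let A be a commutative unital ring, M an A-module (or abelian group), and F : A × A → M a biadditive Hochschild map. If n ≥ 2 and a₁,…,a_n ∈ A satisfy aᵢ² = 0 for every i, then F(a₁⋯a_n, a₁⋯a_n) = 0. (This is the even content of Proposition 3-elm: the element a₁⋯a_n ⊗ x has vanishing self-bracket in any central extension of a current algebra A ⊗ k defined by a cocycle of the form ω_F(a⊗x, b⊗y) = F(a,b)κ(x,y).) -/
theorem Finset.prod_sq_eq_zero_of_mem {ι R : Type*} [CommMonoidWithZero R] {s : Finset ι}
    {f : ι → R} {i : ι} (hi : i ∈ s) (hf : f i ^ 2 = 0) : (∏ j ∈ s, f j) ^ 2 = 0 := by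
  rw [← Finset.prod_pow]
  exact Finset.prod_eq_zero hi hf

theorem hochschild_apply_mul_self_eq_zero {A M : Type*} [CommSemiring A] [AddCommGroup M]
    (F : A → A → M) (hFaddr : ∀ a b c : A, F a (b + c) = F a b + F a c)
    (hFhoch : ∀ a b c : A, F (a * b) c = F a (b * c) + F b (a * c))
    {x y : A} (hx : x ^ 2 = 0) (hy : y ^ 2 = 0) : F (x * y) (x * y) = 0 := by
  have hF0 (z : A) : F z 0 = 0 := by simpa using hFaddr z 0 0
  have hyxy : y * (x * y) = 0 := by rw [mul_left_comm, ← sq, hy, mul_zero]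
  have hxxy : x * (x * y) = 0 := by rw [← mul_assoc, ← sq, hx, zero_mul]
  rw [hFhoch, hyxy, hxxy, hF0, hF0, add_zero]

theorem hochschild_vanishes_on_product_of_square_zero_general
    {A M : Type*} [CommRing A] [AddCommGroup M]
    (F : A → A → M)
    (hFaddr : ∀ a b c : A, F a (b + c) = F a b + F a c)
    (hFhoch : ∀ a b c : A, F (a * b) c = F a (b * c) + F b (a * c))
    (n : ℕ) (hn : 2 ≤ n) (a : Fin n → A) (ha : ∀ i, a i ^ 2 = 0) :
    F (∏ i, a i) (∏ i, a i) = 0 := by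
  obtain ⟨m, rfl⟩ : ∃ m, n = m + 1 := ⟨n - 1, by omega⟩
  have htail : (∏ i : Fin m, a i.succ) ^ 2 = 0 :=
    Finset.prod_sq_eq_zero_of_mem (Finset.mem_univ ⟨0, by omega⟩) (ha _)
  rw [Fin.prod_univ_succ]
  exact hochschild_apply_mul_self_eq_zero F hFaddr hFhoch (ha 0) htail

/-- Let `A` be a commutative unital ring, `M` an abelian group, and
`F : A × A → M` a biadditive Hochschild map (so `F(a,b) = −F(b,a)` and
`F(ab,c) = F(a,bc) + F(b,ac)`).  If `n ≥ 2` and `a₁, …, a_n ∈ A` satisfy `aᵢ² = 0` for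
every `i`, then `F(a₁⋯a_n, a₁⋯a_n) = 0`. -/
theorem hochschild_vanishes_on_product_of_square_zero
    {A M : Type*} [CommRing A] [AddCommGroup M]
    (F : A → A → M)
    (hFaddl : ∀ a b c : A, F (a + b) c = F a c + F b c)
    (hFaddr : ∀ a b c : A, F a (b + c) = F a b + F a c)
    (hFskew : ∀ a b : A, F a b = - F b a)
    (hFhoch : ∀ a b c : A, F (a * b) c = F a (b * c) + F b (a * c))
    (n : ℕ) (hn : 2 ≤ n) (a : Fin n → A) (ha : ∀ i, a i ^ 2 = 0) :
    F (∏ i, a i) (∏ i, a i) = 0 :=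
  hochschild_vanishes_on_product_of_square_zero_general F hFaddr hFhoch n hn a ha
end
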